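/- arXiv:1102.1103 — 12 statements merged into one kernel-verified Lean document; each statement's English description precedes it below -/
import Mathlib

section
/- Let μ be a probability measure on Ω with D(μ‖μ0) ≤ d. Then for every real s > 0, μ(A) ≤ s·ln(1 + (e^{1/s} − 1)·μ0(A)) + s·d. (Weak-duality upper bound underlying Theorem 1.) -/
open MeasureTheory Real

open scoped Classical in
/-- Kullback–Leibler divergence `D(μ‖ν)` between measures, valued in `EReal`:
infinite unless `μ ≪ ν` and the log-likelihood ratio is `μ`-integrable. -/
noncomputable def klDiv {Ω : Type*} [MeasurableSpace Ω] (μ ν : Measure Ω) : EReal :=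
  if μ ≪ ν ∧ Integrable (llr μ ν) μ then ((∫ ω, llr μ ν ω ∂μ : ℝ) : EReal) else ⊤

/-!
Donsker–Varadhan: for every test function `f`, `∫ f dμ ≤ D(μ‖μ0) + log ∫ exp f dμ0`, because
the gap is the divergence of `μ` from the tilted measure `μ0.tilted f`, which is nonnegative by
Gibbs' inequality. The test function `f = 1/s` on `A` and `0` off `A` gives
`μ(A)/s ≤ d + log (1 + (e^{1/s} - 1) μ0(A))`.
-/

section

variable {Ω : Type*} [MeasurableSpace Ω] {μ ν : Measure Ω}

lemma klDiv_le_coe_iff {d : ℝ} :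
    klDiv μ ν ≤ (d : EReal) ↔ μ ≪ ν ∧ Integrable (llr μ ν) μ ∧ ∫ ω, llr μ ν ω ∂μ ≤ d := by
  unfold klDiv
  split_ifs with h
  · simp [h]
  · simp only [top_le_iff, EReal.coe_ne_top, false_iff]
    tauto

variable [IsProbabilityMeasure μ] [IsProbabilityMeasure ν]

lemma integral_le_integral_llr_add_log_integral_exp (hμν : μ ≪ ν)
    (h_int : Integrable (llr μ ν) μ) {f : Ω → ℝ} (hfμ : Integrable f μ)
    (hfν : Integrable (fun ω ↦ exp (f ω)) ν) :
    ∫ ω, f ω ∂μ ≤ ∫ ω, llr μ ν ω ∂μ + log (∫ ω, exp (f ω) ∂ν) := by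
  have : IsProbabilityMeasure (ν.tilted f) := isProbabilityMeasure_tilted hfν
  have hgibbs := InformationTheory.integral_llr_add_sub_measure_univ_nonneg
    (hμν.trans (absolutelyContinuous_tilted hfν)) (integrable_llr_tilted_right hμν hfμ h_int hfν)
  rw [integral_llr_tilted_right hμν hfμ hfν h_int] at hgibbs
  simp only [probReal_univ] at hgibbs
  linarith

lemma integral_exp_indicator_const {A : Set Ω} (hA : MeasurableSet A) (t : ℝ) :
    ∫ ω, exp (A.indicator (fun _ ↦ t) ω) ∂ν = 1 + (exp t - 1) * ν.real A := by
  have hpt : (fun ω ↦ exp (A.indicator (fun _ ↦ t) ω))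
      = fun ω ↦ A.indicator (fun _ ↦ exp t - 1) ω + 1 := by
    ext ω
    by_cases hω : ω ∈ A <;> simp [hω]
  rw [hpt, integral_add ((integrable_const _).indicator hA) (integrable_const 1),
    integral_indicator_const _ hA]
  simp only [integral_const, probReal_univ, smul_eq_mul]
  ring

lemma mul_measureReal_le_integral_llr_add_log (hμν : μ ≪ ν) (h_int : Integrable (llr μ ν) μ)
    {A : Set Ω} (hA : MeasurableSet A) (t : ℝ) :
    t * μ.real A ≤ ∫ ω, llr μ ν ω ∂μ + log (1 + (exp t - 1) * ν.real A) := by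
  have hexp_int : Integrable (fun ω ↦ exp (A.indicator (fun _ ↦ t) ω)) ν := by
    refine (integrable_const (max (exp t) 1)).mono' (by fun_prop (disch := exact hA))
      (Filter.Eventually.of_forall fun ω ↦ ?_)
    by_cases hω : ω ∈ A <;> simp [hω]
  have h := integral_le_integral_llr_add_log_integral_exp hμν h_int
    ((integrable_const t).indicator hA) hexp_int
  rwa [integral_indicator_const _ hA, integral_exp_indicator_const hA, smul_eq_mul,
    mul_comm] at h

end

theorem stmt_0_general {Ω : Type*} [MeasurableSpace Ω] (μ0 μ : Measure Ω)
    [IsProbabilityMeasure μ0] [IsProbabilityMeasure μ]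
    (A : Set Ω) (hA : MeasurableSet A) (d : ℝ)
    (hKL : klDiv μ μ0 ≤ (d : EReal)) (s : ℝ) (hs : 0 < s) :
    (μ A).toReal ≤ s * Real.log (1 + (Real.exp (1 / s) - 1) * (μ0 A).toReal) + s * d := by
  obtain ⟨hac, hint, hle⟩ := klDiv_le_coe_iff.mp hKL
  have h := mul_measureReal_le_integral_llr_add_log hac hint hA (1 / s)
  calc (μ A).toReal = s * (1 / s * μ.real A) := by field_simp; rfl
    _ ≤ s * (d + log (1 + (exp (1 / s) - 1) * μ0.real A)) := by gcongr; linarith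
    _ = s * log (1 + (exp (1 / s) - 1) * (μ0 A).toReal) + s * d := by
      rw [measureReal_def]; ring

/-- Weak-duality upper bound underlying Theorem 1: if `D(μ‖μ0) ≤ d`, then for every `s > 0`,
`μ(A) ≤ s·ln(1 + (e^{1/s} − 1)·μ0(A)) + s·d`. -/
theorem stmt_0 {Ω : Type*} [MeasurableSpace Ω] (μ0 μ : Measure Ω)
    [IsProbabilityMeasure μ0] [IsProbabilityMeasure μ]
    (A : Set Ω) (hA : MeasurableSet A) (d : ℝ) (hd : 0 ≤ d)
    (hKL : klDiv μ μ0 ≤ (d : EReal)) (s : ℝ) (hs : 0 < s) :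
    (μ A).toReal ≤ s * Real.log (1 + (Real.exp (1 / s) - 1) * (μ0 A).toReal) + s * d :=
  stmt_0_general μ0 μ A hA d hKL s hs
end

section
/- Proposition 1: The function P(d) = sup{ μ(A) : μ a probability measure with D(μ‖μ0) ≤ d } satisfies: (1) P is concave on [0,∞); (2) P(0) = μ0(A); (3) P is nondecreasing on [0,∞), and if 0 ≤ d1 < d2 satisfy P(d1) = P(d2), then P(d1) = P(d2) ∈ {0,1} (i.e. P is strictly increasing in d except where it equals 0 or 1). -/
open MeasureTheory Real Filter

/-- Compound outage probability for the class `{μ : D(μ‖μ0) ≤ d}`. -/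
noncomputable def compoundOutage {Ω : Type*} [MeasurableSpace Ω] (μ0 : Measure Ω)
    (A : Set Ω) (d : ℝ) : ℝ :=
  sSup {p : ℝ | ∃ μ : Measure Ω, IsProbabilityMeasure μ ∧ klDiv μ μ0 ≤ (d : EReal) ∧
    p = (μ A).toReal}

/-!
The constraint set `{μ : D(μ‖μ0) ≤ d}` grows with `d`, and a mixture `a μ₁ + b μ₂` of feasible
measures for `x` and `y` is feasible for `a x + b y` because `D(·‖μ0)` is convex (it is the
`μ0`-integral of the convex function `klFun` of the Radon–Nikodym derivative); since
`μ ↦ μ(A)` is affine, `P` is nondecreasing and concave. Gibbs' converse inequality makes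
`{D ≤ 0} = {μ0}`, so `P(0) = μ0(A)`. If `μ0(A) = 0`, every feasible `μ ≪ μ0` misses `A`. Otherwise
`μ0[·|A]` puts mass one on `A` at divergence `-log μ0(A)`, so the concave nondecreasing `P ≤ 1`
attains its maximum `1` and cannot be flat below it.
-/

open ProbabilityTheory Set
open scoped ENNReal NNReal Pointwise

theorem ConcaveOn.eq_of_apply_eq_of_isMaxOn {𝕜 : Type*} [Field 𝕜] [LinearOrder 𝕜]
    [IsStrictOrderedRing 𝕜] {s : Set 𝕜} {f : 𝕜 → 𝕜} {c x y : 𝕜} (hf : ConcaveOn 𝕜 s f)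
    (hmono : MonotoneOn f s) (hc : c ∈ s) (hmax : IsMaxOn f s c) (hx : x ∈ s) (hy : y ∈ s)
    (hxy : x < y) (heq : f x = f y) : f x = f c := by
  refine le_antisymm (hmax hx) ?_
  rcases le_or_gt c y with hcy | hyc
  · exact heq ▸ hmono hc hy hcy
  · have h_slope := hf.slope_anti_adjacent hx hc hxy hyc
    rw [heq, sub_self, zero_div, div_le_iff₀ (sub_pos.2 hyc)] at h_slope
    linarith

lemma neg_log_measureReal_nonneg {α : Type*} [MeasurableSpace α] (μ : Measure α)
    [IsZeroOrProbabilityMeasure μ] (s : Set α) : 0 ≤ -log (μ.real s) :=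
  neg_nonneg.2 (log_nonpos measureReal_nonneg measureReal_le_one)

namespace InformationTheory

variable {α : Type*} [MeasurableSpace α]

lemma klDiv_smul_add_smul_le {μ₁ μ₂ ν : Measure α} [IsFiniteMeasure μ₁] [IsFiniteMeasure μ₂]
    [IsFiniteMeasure ν] (h₁ : μ₁ ≪ ν) (h₂ : μ₂ ≪ ν) {a b : ℝ≥0} (hab : a + b = 1) :
    klDiv (a • μ₁ + b • μ₂) ν ≤ a * klDiv μ₁ ν + b * klDiv μ₂ ν := by
  have hac : a • μ₁ + b • μ₂ ≪ ν := (h₁.smul_left a).add_left (h₂.smul_left b)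
  rw [klDiv_eq_lintegral_klFun_of_ac hac, klDiv_eq_lintegral_klFun_of_ac h₁,
    klDiv_eq_lintegral_klFun_of_ac h₂, ← lintegral_const_mul _ (by fun_prop),
    ← lintegral_const_mul _ (by fun_prop), ← lintegral_add_left (by fun_prop)]
  refine lintegral_mono_ae ?_
  filter_upwards [Measure.rnDeriv_add (a • μ₁) (b • μ₂) ν, Measure.rnDeriv_smul_left μ₁ ν a,
    Measure.rnDeriv_smul_left μ₂ ν b, Measure.rnDeriv_lt_top μ₁ ν, Measure.rnDeriv_lt_top μ₂ ν]
    with x h_add h_smul₁ h_smul₂ h_lt₁ h_lt₂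
  set u := (μ₁.rnDeriv ν x).toReal
  set v := (μ₂.rnDeriv ν x).toReal
  have h_toReal : ((a • μ₁ + b • μ₂).rnDeriv ν x).toReal = a * u + b * v := by
    rw [h_add, Pi.add_apply, h_smul₁, h_smul₂, Pi.smul_apply, Pi.smul_apply, ENNReal.smul_def,
      ENNReal.smul_def, smul_eq_mul, smul_eq_mul, ENNReal.toReal_add (by finiteness)
      (by finiteness), ENNReal.toReal_mul, ENNReal.toReal_mul]
    rfl
  have h_convex : klFun (a * u + b * v) ≤ a * klFun u + b * klFun v :=
    convexOn_klFun.2 (mem_Ici.2 ENNReal.toReal_nonneg) (mem_Ici.2 ENNReal.toReal_nonneg)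
      a.2 b.2 (by exact_mod_cast hab)
  rw [h_toReal]
  refine (ENNReal.ofReal_le_ofReal h_convex).trans_eq ?_
  have hu : 0 ≤ klFun u := klFun_nonneg ENNReal.toReal_nonneg
  have hv : 0 ≤ klFun v := klFun_nonneg ENNReal.toReal_nonneg
  rw [ENNReal.ofReal_add (mul_nonneg a.coe_nonneg hu) (mul_nonneg b.coe_nonneg hv),
    ENNReal.ofReal_mul a.coe_nonneg, ENNReal.ofReal_mul b.coe_nonneg, ENNReal.ofReal_coe_nnreal,
    ENNReal.ofReal_coe_nnreal]

lemma klDiv_cond_self {μ : Measure α} [IsProbabilityMeasure μ] {s : Set α}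
    (hs : MeasurableSet s) (hμs : μ s ≠ 0) :
    klDiv μ[|s] μ = ENNReal.ofReal (-log (μ.real s)) := by
  have h_restrict : μ.restrict s ≪ μ := Measure.absolutelyContinuous_of_le Measure.restrict_le_self
  have h_llr : llr μ[|s] μ =ᵐ[μ[|s]] fun _ ↦ -log (μ.real s) := by
    refine Measure.ae_smul_measure ?_ _
    filter_upwards [llr_smul_left h_restrict (μ s)⁻¹ (by simp) (by simpa),
      h_restrict.ae_le (Measure.rnDeriv_restrict_self μ hs), ae_restrict_mem hs]
      with x h_smul h_rnDeriv hx
    rw [ProbabilityTheory.cond, h_smul, llr_def]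
    simp [h_rnDeriv, hx, measureReal_def]
  have := cond_isProbabilityMeasure hμs
  rw [klDiv_of_ac_of_integrable cond_absolutelyContinuous
    ((integrable_const _).congr h_llr.symm), integral_congr_ae h_llr]
  simp

end InformationTheory

section KullbackLeibler

variable {α : Type*} [MeasurableSpace α]

lemma klDiv_eq_coe_klDiv (μ ν : Measure α) [IsProbabilityMeasure μ] [IsProbabilityMeasure ν] :
    klDiv μ ν = (InformationTheory.klDiv μ ν : EReal) := by
  by_cases h : μ ≪ ν ∧ Integrable (llr μ ν) μ
  · rw [klDiv, if_pos h, ← InformationTheory.toReal_klDiv_of_measure_eq h.1 (by simp),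
      EReal.coe_ennreal_toReal (InformationTheory.klDiv_ne_top h.1 h.2)]
  · rw [klDiv, if_neg h, InformationTheory.klDiv_eq_top_iff.2 fun hac hint ↦ h ⟨hac, hint⟩]
    rfl

lemma klDiv_le_coe_iff_s4 {μ ν : Measure α} [IsProbabilityMeasure μ] [IsProbabilityMeasure ν]
    {d : ℝ} (hd : 0 ≤ d) :
    klDiv μ ν ≤ (d : EReal) ↔ InformationTheory.klDiv μ ν ≤ ENNReal.ofReal d := by
  rw [klDiv_eq_coe_klDiv, ← EReal.coe_ennreal_le_coe_ennreal_iff, EReal.coe_ennreal_ofReal,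
    max_eq_left hd]

end KullbackLeibler

section CompoundOutage

variable {Ω : Type*} [MeasurableSpace Ω] (μ0 : Measure Ω) (A : Set Ω)

def outageValues (d : ℝ) : Set ℝ :=
  {p | ∃ μ : Measure Ω, IsProbabilityMeasure μ ∧ klDiv μ μ0 ≤ (d : EReal) ∧ p = μ.real A}

lemma compoundOutage_eq_sSup (d : ℝ) : compoundOutage μ0 A d = sSup (outageValues μ0 A d) :=
  rfl

lemma outageValues_subset_Icc (d : ℝ) : outageValues μ0 A d ⊆ Icc 0 1 := by
  rintro _ ⟨μ, hμ, -, rfl⟩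
  exact ⟨measureReal_nonneg, measureReal_le_one⟩

lemma outageValues_bddAbove (d : ℝ) : BddAbove (outageValues μ0 A d) :=
  ⟨1, fun _ hp ↦ (outageValues_subset_Icc μ0 A d hp).2⟩

lemma outageValues_mono : Monotone (outageValues μ0 A) := by
  rintro d₁ d₂ h _ ⟨μ, hμ, hkl, rfl⟩
  exact ⟨μ, hμ, hkl.trans (EReal.coe_le_coe_iff.2 h), rfl⟩

lemma compoundOutage_le_one (d : ℝ) : compoundOutage μ0 A d ≤ 1 :=
  Real.sSup_le (fun _ hp ↦ (outageValues_subset_Icc μ0 A d hp).2) zero_le_one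

lemma compoundOutage_eq_zero_of_measure_eq_zero (h0 : μ0 A = 0) (d : ℝ) :
    compoundOutage μ0 A d = 0 := by
  have h_zero : ∀ p ∈ outageValues μ0 A d, p = 0 := by
    rintro _ ⟨μ, hμ, hkl, rfl⟩
    have hac : μ ≪ μ0 := by
      by_contra h
      simp [klDiv, h] at hkl
    simp [measureReal_def, hac h0]
  exact le_antisymm (Real.sSup_nonpos fun p hp ↦ (h_zero p hp).le)
    (Real.sSup_nonneg fun p hp ↦ (h_zero p hp).ge)

variable [IsProbabilityMeasure μ0]

lemma measureReal_mem_outageValues {d : ℝ} (hd : 0 ≤ d) : μ0.real A ∈ outageValues μ0 A d :=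
  ⟨μ0, inferInstance, (klDiv_le_coe_iff_s4 hd).2 (by simp), rfl⟩

lemma outageValues_zero : outageValues μ0 A 0 = {μ0.real A} := by
  refine subset_antisymm ?_ (singleton_subset_iff.2 (measureReal_mem_outageValues μ0 A le_rfl))
  rintro _ ⟨μ, hμ, hkl, rfl⟩
  rw [klDiv_le_coe_iff_s4 le_rfl, ENNReal.ofReal_zero, nonpos_iff_eq_zero,
    InformationTheory.klDiv_eq_zero_iff] at hkl
  rw [hkl, mem_singleton_iff]

lemma smul_add_smul_outageValues_subset {x y a b : ℝ} (hx : 0 ≤ x) (hy : 0 ≤ y) (ha : 0 ≤ a)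
    (hb : 0 ≤ b) (hab : a + b = 1) :
    a • outageValues μ0 A x + b • outageValues μ0 A y ⊆ outageValues μ0 A (a * x + b * y) := by
  rintro _ ⟨_, ⟨_, ⟨μ₁, hμ₁, hkl₁, rfl⟩, rfl⟩, _, ⟨_, ⟨μ₂, hμ₂, hkl₂, rfl⟩, rfl⟩, rfl⟩
  lift a to ℝ≥0 using ha
  lift b to ℝ≥0 using hb
  rw [klDiv_le_coe_iff_s4 hx] at hkl₁
  rw [klDiv_le_coe_iff_s4 hy] at hkl₂
  have hab' : a + b = 1 := by exact_mod_cast hab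
  have h_prob : IsProbabilityMeasure (a • μ₁ + b • μ₂) := ⟨by simp [← ENNReal.coe_add, hab']⟩
  have hac : ∀ {μ : Measure Ω} {z : ℝ}, InformationTheory.klDiv μ μ0 ≤ ENNReal.ofReal z →
      μ ≪ μ0 := fun h ↦
    (InformationTheory.klDiv_ne_top_iff.1 (ne_top_of_le_ne_top ENNReal.ofReal_ne_top h)).1
  refine ⟨a • μ₁ + b • μ₂, h_prob, (klDiv_le_coe_iff_s4 (by positivity)).2 ?_, ?_⟩
  · calc InformationTheory.klDiv (a • μ₁ + b • μ₂) μ0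
        ≤ a * InformationTheory.klDiv μ₁ μ0 + b * InformationTheory.klDiv μ₂ μ0 :=
          InformationTheory.klDiv_smul_add_smul_le (hac hkl₁) (hac hkl₂) hab'
      _ ≤ a * ENNReal.ofReal x + b * ENNReal.ofReal y := by gcongr
      _ = ENNReal.ofReal (a * x + b * y) := by
          rw [ENNReal.ofReal_add (by positivity) (by positivity), ENNReal.ofReal_mul a.coe_nonneg,
            ENNReal.ofReal_mul b.coe_nonneg, ENNReal.ofReal_coe_nnreal, ENNReal.ofReal_coe_nnreal]
  · rw [measureReal_add_apply, measureReal_nnreal_smul_apply, measureReal_nnreal_smul_apply]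
    rfl

lemma one_mem_outageValues (hA : MeasurableSet A) (h0 : μ0 A ≠ 0) {d : ℝ}
    (hd : -log (μ0.real A) ≤ d) : 1 ∈ outageValues μ0 A d := by
  have := cond_isProbabilityMeasure (μ := μ0) h0
  refine ⟨μ0[|A], this, ?_, ?_⟩
  · rw [klDiv_le_coe_iff_s4 ((neg_log_measureReal_nonneg μ0 A).trans hd),
      InformationTheory.klDiv_cond_self hA h0]
    exact ENNReal.ofReal_le_ofReal hd
  · simp [measureReal_def, cond_apply_self h0 (measure_ne_top _ _)]

lemma compoundOutage_zero : compoundOutage μ0 A 0 = μ0.real A := by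
  rw [compoundOutage_eq_sSup, outageValues_zero, csSup_singleton]

lemma compoundOutage_eq_one (hA : MeasurableSet A) (h0 : μ0 A ≠ 0) {d : ℝ}
    (hd : -log (μ0.real A) ≤ d) : compoundOutage μ0 A d = 1 :=
  le_antisymm (compoundOutage_le_one μ0 A d)
    (le_csSup (outageValues_bddAbove μ0 A d) (one_mem_outageValues μ0 A hA h0 hd))

lemma monotoneOn_compoundOutage : MonotoneOn (compoundOutage μ0 A) (Ici 0) :=
  fun _ hd₁ _ _ h ↦ csSup_le_csSup (outageValues_bddAbove μ0 A _)
    ⟨_, measureReal_mem_outageValues μ0 A hd₁⟩ (outageValues_mono μ0 A h)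

lemma concaveOn_compoundOutage : ConcaveOn ℝ (Ici 0) (compoundOutage μ0 A) := by
  refine ⟨convex_Ici 0, fun x hx y hy a b ha hb hab ↦ ?_⟩
  have hne : ∀ {d : ℝ}, 0 ≤ d → (outageValues μ0 A d).Nonempty :=
    fun hd ↦ ⟨_, measureReal_mem_outageValues μ0 A hd⟩
  calc a • compoundOutage μ0 A x + b • compoundOutage μ0 A y
      = sSup (a • outageValues μ0 A x + b • outageValues μ0 A y) := by
        rw [csSup_add (hne hx).smul_set ((outageValues_bddAbove μ0 A x).smul_of_nonneg ha)
          (hne hy).smul_set ((outageValues_bddAbove μ0 A y).smul_of_nonneg hb),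
          Real.sSup_smul_of_nonneg ha, Real.sSup_smul_of_nonneg hb]
        rfl
    _ ≤ compoundOutage μ0 A (a • x + b • y) :=
        csSup_le_csSup (outageValues_bddAbove μ0 A _)
          (((hne hx).smul_set).add (hne hy).smul_set)
          (smul_add_smul_outageValues_subset μ0 A hx hy ha hb hab)

end CompoundOutage

/-- Proposition 1: `P(d) = sup{μ(A) : D(μ‖μ0) ≤ d}` is concave on `[0,∞)`, satisfies
`P(0) = μ0(A)`, is nondecreasing, and is strictly increasing except where it equals 0 or 1. -/
theorem stmt_4 {Ω : Type*} [MeasurableSpace Ω] (μ0 : Measure Ω) [IsProbabilityMeasure μ0]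
    (A : Set Ω) (hA : MeasurableSet A) :
    ConcaveOn ℝ (Set.Ici 0) (compoundOutage μ0 A) ∧
    compoundOutage μ0 A 0 = (μ0 A).toReal ∧
    (∀ d1 d2 : ℝ, 0 ≤ d1 → d1 ≤ d2 → compoundOutage μ0 A d1 ≤ compoundOutage μ0 A d2) ∧
    (∀ d1 d2 : ℝ, 0 ≤ d1 → d1 < d2 → compoundOutage μ0 A d1 = compoundOutage μ0 A d2 →
      compoundOutage μ0 A d1 = 0 ∨ compoundOutage μ0 A d1 = 1) := by
  refine ⟨concaveOn_compoundOutage μ0 A, compoundOutage_zero μ0 A,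
    fun d1 d2 h1 h12 ↦ monotoneOn_compoundOutage μ0 A h1 (h1.trans h12) h12,
    fun d1 d2 h1 h12 heq ↦ ?_⟩
  rcases eq_or_ne (μ0 A) 0 with h0 | h0
  · exact .inl (compoundOutage_eq_zero_of_measure_eq_zero μ0 A h0 d1)
  · have h_one : compoundOutage μ0 A (-log (μ0.real A)) = 1 :=
      compoundOutage_eq_one μ0 A hA h0 le_rfl
    have hmax : IsMaxOn (compoundOutage μ0 A) (Ici 0) (-log (μ0.real A)) := fun d _ ↦
      h_one ▸ compoundOutage_le_one μ0 A d
    right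
    rw [← h_one]
    exact (concaveOn_compoundOutage μ0 A).eq_of_apply_eq_of_isMaxOn
      (monotoneOn_compoundOutage μ0 A) (neg_log_measureReal_nonneg μ0 A) hmax h1
      (h1.trans h12.le) h12 heq
end

section
/- Proposition 3: For every fixed d ≥ 0, the function ε ↦ Φ(ε,d) is nondecreasing and concave on [0,1], with boundary values Φ(0,d) = 0 and Φ(1,d) = 1; moreover if 0 ≤ ε1 < ε2 ≤ 1 and Φ(ε2,d) < 1, then Φ(ε1,d) < Φ(ε2,d). -/
/-!
`Φ(·, d)` is the pointwise infimum over `s > 0` of the functions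
`ε ↦ s·log(1 + (e^{1/s} − 1)·ε) + s·d`, each monotone and concave on `[0, ∞)` (a nonnegative
multiple of the logarithm of an increasing affine function), so `Φ(·, d)` inherits both properties.
At `ε = 0` and `ε = 1` these functions are `s·d` and `1 + s·d`, whose infima are `0` and `1`
(approached as `s → 0⁺`). Finally a concave function which increases on `[ε₂, 1]` strictly
increases on `[ε₁, ε₂]`, since its secant slopes decrease.
-/

open Real

noncomputable def Phi (e d : ℝ) : ℝ :=
  sInf {y : ℝ | ∃ s : ℝ, 0 < s ∧
    y = s * Real.log (1 + (Real.exp (1 / s) - 1) * e) + s * d}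

open Set Filter Topology

theorem ConcaveOn.apply_lt_apply_of_lt_right {𝕜 : Type*} [Field 𝕜] [LinearOrder 𝕜]
    [IsStrictOrderedRing 𝕜] {s : Set 𝕜} {f : 𝕜 → 𝕜} (hf : ConcaveOn 𝕜 s f) {x y z : 𝕜} (hx : x ∈ s) (hz : z ∈ s) (hxy : x < y) (hyz : y < z) (h : f y < f z) :
    f x < f y := by
  have hslope := hf.slope_anti_adjacent hx hz hxy hyz
  have := (div_pos (sub_pos.2 h) (sub_pos.2 hyz)).trans_le hslope
  exact sub_pos.1 ((div_pos_iff_of_pos_right (sub_pos.2 hxy)).1 this)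

theorem concaveOn_ciInf {ι E : Type*} [Nonempty ι] [AddCommMonoid E] [Module ℝ E] {s : Set E}
    {f : ι → E → ℝ} (hs : Convex ℝ s) (hf : ∀ i, ConcaveOn ℝ s (f i))
    (hbdd : ∀ x ∈ s, BddBelow (range fun i => f i x)) :
    ConcaveOn ℝ s fun x => ⨅ i, f i x := by
  refine ⟨hs, fun x hx y hy a b ha hb hab => le_ciInf fun i => ?_⟩
  calc (a • ⨅ i, f i x) + b • ⨅ i, f i y ≤ a • f i x + b • f i y := by
        gcongr
        exacts [ciInf_le (hbdd x hx) i, ciInf_le (hbdd y hy) i]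
    _ ≤ f i (a • x + b • y) := (hf i).2 hx hy ha hb hab

theorem monotoneOn_ciInf {ι α : Type*} [Nonempty ι] [Preorder α] {s : Set α}
    {f : ι → α → ℝ} (hf : ∀ i, MonotoneOn (f i) s)
    (hbdd : ∀ x ∈ s, BddBelow (range fun i => f i x)) :
    MonotoneOn (fun x => ⨅ i, f i x) s := fun x hx _ hy hxy =>
  le_ciInf fun i => (ciInf_le (hbdd x hx) i).trans (hf i hx hy hxy)

theorem concaveOn_log_one_add_mul {c : ℝ} (hc : 0 ≤ c) :
    ConcaveOn ℝ (Ici 0) fun e => log (1 + c * e) := by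
  refine ⟨convex_Ici 0, fun x (hx : 0 ≤ x) y (hy : 0 ≤ y) a b ha hb hab => ?_⟩
  have key := strictConcaveOn_log_Ioi.concaveOn.2 (x := 1 + c * x) (y := 1 + c * y)
    (by simp only [mem_Ioi]; positivity) (by simp only [mem_Ioi]; positivity) ha hb hab
  convert key using 2
  simp only [smul_eq_mul]
  linear_combination -hab

noncomputable def phiObjective (e d s : ℝ) : ℝ :=
  s * log (1 + (exp (1 / s) - 1) * e) + s * d

lemma Phi_eq_iInf (e d : ℝ) : Phi e d = ⨅ s : Ioi (0 : ℝ), phiObjective e d s := by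
  rw [Phi, ← sInf_image']
  congr 1
  ext y
  simp [phiObjective, eq_comm]

lemma exp_one_div_sub_one_nonneg {s : ℝ} (hs : 0 < s) : 0 ≤ exp (1 / s) - 1 :=
  sub_nonneg.2 (one_le_exp (by positivity))

lemma phiObjective_nonneg {e d s : ℝ} (hd : 0 ≤ d) (he : 0 ≤ e) (hs : 0 < s) :
    0 ≤ phiObjective e d s := by
  have := exp_one_div_sub_one_nonneg hs
  unfold phiObjective
  have : 0 ≤ log (1 + (exp (1 / s) - 1) * e) := log_nonneg (by nlinarith)
  positivity

lemma phiObjective_zero (d s : ℝ) : phiObjective 0 d s = s * d := by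
  simp [phiObjective]

lemma phiObjective_one (d : ℝ) {s : ℝ} (hs : s ≠ 0) : phiObjective 1 d s = 1 + s * d := by
  simp [phiObjective, hs]

lemma monotoneOn_phiObjective (d : ℝ) {s : ℝ} (hs : 0 < s) :
    MonotoneOn (phiObjective · d s) (Ici 0) := by
  intro a (ha : 0 ≤ a) b _ hab
  have := exp_one_div_sub_one_nonneg hs
  simp only [phiObjective]
  gcongr

lemma concaveOn_phiObjective (d : ℝ) {s : ℝ} (hs : 0 < s) :
    ConcaveOn ℝ (Ici 0) (phiObjective · d s) :=
  ((concaveOn_log_one_add_mul (exp_one_div_sub_one_nonneg hs)).smul hs.le).add_const (s * d)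

lemma bddBelow_phiObjective {e d : ℝ} (hd : 0 ≤ d) (he : 0 ≤ e) :
    BddBelow (range fun s : Ioi (0 : ℝ) => phiObjective e d s) :=
  ⟨0, forall_mem_range.2 fun s => phiObjective_nonneg hd he s.2⟩

lemma Phi_nonneg {e d : ℝ} (hd : 0 ≤ d) (he : 0 ≤ e) : 0 ≤ Phi e d := by
  rw [Phi_eq_iInf]
  exact le_ciInf fun s => phiObjective_nonneg hd he s.2

lemma Phi_le_of_tendsto {e d L : ℝ} (hd : 0 ≤ d) (he : 0 ≤ e)
    (h : Tendsto (phiObjective e d) (𝓝[>] 0) (𝓝 L)) : Phi e d ≤ L := by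
  refine ge_of_tendsto h (eventually_nhdsWithin_of_forall fun s hs => ?_)
  rw [Phi_eq_iInf]
  exact ciInf_le (bddBelow_phiObjective hd he) ⟨s, hs⟩

lemma tendsto_const_add_mul_nhdsGT_zero (c d : ℝ) :
    Tendsto (fun s => c + s * d) (𝓝[>] 0) (𝓝 c) := by
  have : Continuous fun s : ℝ => c + s * d := by fun_prop
  simpa using (this.tendsto 0).mono_left nhdsWithin_le_nhds

lemma Phi_zero {d : ℝ} (hd : 0 ≤ d) : Phi 0 d = 0 := by
  refine le_antisymm (Phi_le_of_tendsto hd le_rfl ?_) (Phi_nonneg hd le_rfl)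
  simpa [funext (phiObjective_zero d)] using tendsto_const_add_mul_nhdsGT_zero 0 d

lemma Phi_one {d : ℝ} (hd : 0 ≤ d) : Phi 1 d = 1 := by
  refine le_antisymm (Phi_le_of_tendsto hd zero_le_one ?_) ?_
  · refine (tendsto_const_add_mul_nhdsGT_zero 1 d).congr' ?_
    filter_upwards [self_mem_nhdsWithin] with s (hs : 0 < s)
    rw [phiObjective_one d hs.ne']
  · rw [Phi_eq_iInf]
    refine le_ciInf fun ⟨s, (hs : 0 < s)⟩ => ?_
    rw [phiObjective_one d hs.ne']
    exact le_add_of_nonneg_right (by positivity)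

lemma Phi_monotoneOn {d : ℝ} (hd : 0 ≤ d) : MonotoneOn (Phi · d) (Ici 0) := by
  simp only [Phi_eq_iInf]
  exact monotoneOn_ciInf (fun s => monotoneOn_phiObjective d s.2)
    fun _ he => bddBelow_phiObjective hd he

lemma Phi_concaveOn {d : ℝ} (hd : 0 ≤ d) : ConcaveOn ℝ (Ici 0) (Phi · d) := by
  simp only [Phi_eq_iInf]
  exact concaveOn_ciInf (convex_Ici 0) (fun s => concaveOn_phiObjective d s.2)
    fun _ he => bddBelow_phiObjective hd he

/-- Proposition 3: for fixed `d ≥ 0`, `ε ↦ Φ(ε,d)` is nondecreasing and concave on `[0,1]`,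
with `Φ(0,d) = 0`, `Φ(1,d) = 1`, and strictly increasing wherever its value stays below 1. -/
theorem stmt_6 (d : ℝ) (hd : 0 ≤ d) :
    MonotoneOn (fun e => Phi e d) (Set.Icc 0 1) ∧
    ConcaveOn ℝ (Set.Icc 0 1) (fun e => Phi e d) ∧
    Phi 0 d = 0 ∧ Phi 1 d = 1 ∧
    (∀ e1 e2 : ℝ, 0 ≤ e1 → e1 < e2 → e2 ≤ 1 → Phi e2 d < 1 → Phi e1 d < Phi e2 d) := by
  refine ⟨(Phi_monotoneOn hd).mono Icc_subset_Ici_self,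
    (Phi_concaveOn hd).subset Icc_subset_Ici_self (convex_Icc 0 1), Phi_zero hd, Phi_one hd, ?_⟩
  intro e1 e2 he1 h12 he2 hlt
  rw [← Phi_one hd] at hlt
  have he2' : e2 < 1 := he2.lt_of_ne (by rintro rfl; exact hlt.false)
  exact (Phi_concaveOn hd).apply_lt_apply_of_lt_right he1 (mem_Ici.2 zero_le_one) h12 he2' hlt
end

section
/- Proposition 4: For any d ≥ 0, the compound outage probability P(d) = sup{ μ(A) : D(μ‖μ0) ≤ d } satisfies ε ≤ P(d) ≤ min( d + (e − 1)·ε , 1 ), where ε = μ0(A) and e is Euler's number. -/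
open MeasureTheory Real Filter

/-!
Change of measure: with `f = dμ/dμ0`, the Fenchel–Young inequality `f b ≤ f log f - f + e^b`
applied to `b = 1_A` and integrated against `μ0` gives
`μ(A) ≤ D(μ‖μ0) - 1 + ∫ e^{1_A} dμ0 = D(μ‖μ0) + (e - 1) μ0(A)`.
The lower bound comes from `μ = μ0` itself, which has divergence `0 ≤ d`.
-/

lemma Real.mul_le_mul_log_sub_add_exp {x : ℝ} (hx : 0 ≤ x) (b : ℝ) :
    x * b ≤ x * log x - x + exp b := by
  rcases hx.eq_or_lt with rfl | hx
  · simpa using (exp_pos b).le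
  · have h := mul_le_mul_of_nonneg_left (add_one_le_exp (b - log x)) hx.le
    rw [exp_sub, exp_log hx, mul_div_cancel₀ _ hx.ne'] at h
    linarith

section ChangeOfMeasure

variable {α : Type*} [MeasurableSpace α] {μ ν : Measure α}

lemma integral_le_integral_llr_sub_add_integral_exp [IsFiniteMeasure μ] [SigmaFinite ν]
    (hμν : μ ≪ ν) (h_llr : Integrable (llr μ ν) μ) {g : α → ℝ} (hg : Integrable g μ)
    (hg_exp : Integrable (fun x ↦ exp (g x)) ν) :
    ∫ x, g x ∂μ ≤ ∫ x, llr μ ν x ∂μ - μ.real Set.univ + ∫ x, exp (g x) ∂ν := by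
  set f : α → ℝ := fun x ↦ (μ.rnDeriv ν x).toReal
  have hf_llr : Integrable (fun x ↦ f x * llr μ ν x) ν :=
    (integrable_toReal_rnDeriv_mul_iff hμν).mpr h_llr
  have hf : Integrable f ν := Measure.integrable_toReal_rnDeriv
  have hf_llr_sub : Integrable (fun x ↦ f x * llr μ ν x - f x) ν := hf_llr.sub hf
  calc ∫ x, g x ∂μ = ∫ x, f x * g x ∂ν := (integral_rnDeriv_smul hμν).symm
    _ ≤ ∫ x, (f x * llr μ ν x - f x + exp (g x)) ∂ν := by
        refine integral_mono ((integrable_toReal_rnDeriv_mul_iff hμν).mpr hg)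
          (hf_llr_sub.add hg_exp) fun x ↦ ?_
        exact Real.mul_le_mul_log_sub_add_exp ENNReal.toReal_nonneg (g x)
    _ = ∫ x, llr μ ν x ∂μ - μ.real Set.univ + ∫ x, exp (g x) ∂ν := by
        rw [integral_add hf_llr_sub hg_exp, integral_sub hf_llr hf,
          Measure.integral_toReal_rnDeriv hμν]
        congr 2
        exact integral_rnDeriv_smul hμν

lemma measureReal_le_integral_llr_add [IsProbabilityMeasure μ] [IsProbabilityMeasure ν]
    (hμν : μ ≪ ν) (h_llr : Integrable (llr μ ν) μ) {s : Set α} (hs : MeasurableSet s) :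
    μ.real s ≤ ∫ x, llr μ ν x ∂μ + (exp 1 - 1) * ν.real s := by
  have h_exp :
      (fun x ↦ exp (s.indicator 1 x)) = fun x ↦ s.indicator (fun _ ↦ exp 1 - 1) x + 1 := by
    funext x
    by_cases hx : x ∈ s <;> simp [hx]
  have h_ind : Integrable (s.indicator fun _ ↦ exp 1 - 1) ν := (integrable_const _).indicator hs
  have h := integral_le_integral_llr_sub_add_integral_exp hμν h_llr (g := s.indicator 1)
    ((integrable_const 1).indicator hs) (h_exp ▸ h_ind.add (integrable_const 1))
  rw [h_exp, integral_add h_ind (integrable_const 1), integral_indicator_one hs,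
    integral_indicator_const _ hs] at h
  simp only [probReal_univ, integral_const, smul_eq_mul, mul_one] at h
  linarith

end ChangeOfMeasure

lemma klDiv_self {α : Type*} [MeasurableSpace α] (μ : Measure α) [SigmaFinite μ] :
    klDiv μ μ = 0 := by
  have h_int : Integrable (llr μ μ) μ := (integrable_zero _ _ μ).congr (llr_self μ).symm
  rw [klDiv, if_pos ⟨Measure.AbsolutelyContinuous.rfl, h_int⟩, integral_congr_ae (llr_self μ)]
  simp

lemma measureReal_le_of_klDiv_le {α : Type*} [MeasurableSpace α] {μ ν : Measure α}
    [IsProbabilityMeasure μ] [IsProbabilityMeasure ν] {s : Set α} (hs : MeasurableSet s)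
    {d : ℝ} (h : klDiv μ ν ≤ d) : μ.real s ≤ d + (exp 1 - 1) * ν.real s := by
  unfold klDiv at h
  split_ifs at h with h_fin
  · have h_bound := measureReal_le_integral_llr_add h_fin.1 h_fin.2 hs
    have h_llr : ∫ x, llr μ ν x ∂μ ≤ d := EReal.coe_le_coe_iff.mp h
    linarith
  · simp at h

/-- Proposition 4: `ε ≤ P(d) ≤ min(d + (e − 1)·ε, 1)`, where `ε = μ0(A)`. -/
theorem stmt_7 {Ω : Type*} [MeasurableSpace Ω] (μ0 : Measure Ω) [IsProbabilityMeasure μ0]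
    (A : Set Ω) (hA : MeasurableSet A) (d : ℝ) (hd : 0 ≤ d) :
    (μ0 A).toReal ≤ compoundOutage μ0 A d ∧
    compoundOutage μ0 A d ≤ min (d + (Real.exp 1 - 1) * (μ0 A).toReal) 1 := by
  set S := {p : ℝ | ∃ μ : Measure Ω, IsProbabilityMeasure μ ∧ klDiv μ μ0 ≤ (d : EReal) ∧
    p = (μ A).toReal}
  have h_mem : (μ0 A).toReal ∈ S :=
    ⟨μ0, inferInstance, by rw [klDiv_self]; exact_mod_cast hd, rfl⟩
  have h_bound : ∀ p ∈ S, p ≤ min (d + (Real.exp 1 - 1) * (μ0 A).toReal) 1 := by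
    rintro _ ⟨μ, _, hμ, rfl⟩
    exact le_min (measureReal_le_of_klDiv_le hA hμ) measureReal_le_one
  exact ⟨le_csSup ⟨_, h_bound⟩ h_mem, csSup_le ⟨_, h_mem⟩ h_bound⟩
end

section
/- Proposition 5 (uncertainty-dominated asymptotics): For every fixed d > 0, Φ(ε,d) · ( ln(d/ε) − ln ln(d/ε) ) / d → 1 as ε → 0⁺. -/
open Real Filter

lemma phi_bddBelow (e d : ℝ) (he : 0 ≤ e) (hd : 0 ≤ d) :
    BddBelow {y : ℝ | ∃ s : ℝ, 0 < s ∧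
      y = s * Real.log (1 + (Real.exp (1 / s) - 1) * e) + s * d} := by
  refine ⟨0, fun y ⟨s, hs, hy⟩ => ?_⟩
  have h1 : (0:ℝ) ≤ Real.exp (1/s) - 1 := by
    have := Real.one_le_exp (le_of_lt (by positivity : (0:ℝ) < 1/s))
    linarith
  have h2 : (0:ℝ) ≤ Real.log (1 + (Real.exp (1 / s) - 1) * e) := by
    apply Real.log_nonneg; nlinarith
  rw [hy]; positivity

lemma phi_nonneg (e d : ℝ) (he : 0 ≤ e) (hd : 0 ≤ d) : 0 ≤ Phi e d := by
  refine le_csInf ⟨_, 1, one_pos, rfl⟩ ?_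
  rintro y ⟨s, hs, rfl⟩
  have h1 : (0:ℝ) ≤ Real.exp (1/s) - 1 := by
    have := Real.one_le_exp (le_of_lt (by positivity : (0:ℝ) < 1/s))
    linarith
  have h2 : (0:ℝ) ≤ Real.log (1 + (Real.exp (1 / s) - 1) * e) := by
    apply Real.log_nonneg; nlinarith
  positivity

lemma phi_lower (e d : ℝ) (hd : 0 < d) (he : 0 < e) (he1 : e < 1)
    (hed : Real.log e + d ≤ 0) : d / (-Real.log e) ≤ Phi e d := by
  have hle : Real.log e < 0 := Real.log_neg he he1
  refine le_csInf ⟨_, 1, one_pos, rfl⟩ ?_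
  rintro y ⟨s, hs, rfl⟩
  have hexp : (1:ℝ) ≤ Real.exp (1/s) := Real.one_le_exp (by positivity)
  rcases le_or_gt (1 / (-Real.log e)) s with hcase | hcase
  · -- s large: y ≥ s d ≥ d/(-log e)
    have h2 : (0:ℝ) ≤ Real.log (1 + (Real.exp (1 / s) - 1) * e) := by
      apply Real.log_nonneg; nlinarith
    have : d / (-Real.log e) ≤ s * d := by
      rw [div_le_iff₀ (by linarith)] at hcase ⊢
      · nlinarith
    nlinarith
  · -- s small
    have hkey : Real.exp (1/s) * e ≤ 1 + (Real.exp (1 / s) - 1) * e := by nlinarith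
    have hlog : 1/s + Real.log e ≤ Real.log (1 + (Real.exp (1 / s) - 1) * e) := by
      calc 1/s + Real.log e = Real.log (Real.exp (1/s) * e) := by
            rw [Real.log_mul (Real.exp_ne_zero _) (ne_of_gt he), Real.log_exp]
        _ ≤ _ := Real.log_le_log (by positivity) hkey
    have h1 : 1 + s * (Real.log e + d) ≤ s * Real.log (1 + (Real.exp (1 / s) - 1) * e) + s * d := by
      have := mul_le_mul_of_nonneg_left hlog (le_of_lt hs)
      have hss : s * (1/s) = 1 := by field_simp
      nlinarith
    have h2 : d / (-Real.log e) ≤ 1 + s * (Real.log e + d) := by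
      rw [lt_div_iff₀ (by linarith)] at hcase
      rw [div_le_iff₀ (by linarith)]
      nlinarith
    linarith

lemma phi_upper (e d : ℝ) (hd : 0 < d) (he : 0 < e) (hL : 0 < Real.log (d/e)) :
    Phi e d ≤ (1/(Real.log (d/e) - Real.log (Real.log (d/e)))) * (d/Real.log (d/e))
      + (1/(Real.log (d/e) - Real.log (Real.log (d/e)))) * d := by
  set L := Real.log (d/e) with hLdef
  set t := L - Real.log L with htdef
  have ht : 0 < t := by
    have := Real.log_le_sub_one_of_pos hL
    simp only [htdef]; linarith
  have hmem : (1/t) * Real.log (1 + (Real.exp (1 / (1/t)) - 1) * e) + (1/t) * d ∈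
      {y : ℝ | ∃ s : ℝ, 0 < s ∧
        y = s * Real.log (1 + (Real.exp (1 / s) - 1) * e) + s * d} :=
    ⟨1/t, by positivity, rfl⟩
  have hPhi := csInf_le (phi_bddBelow e d he.le hd.le) hmem
  have hde : 0 < d / e := by positivity
  have hexpt : Real.exp t * e = d / L := by
    rw [htdef, Real.exp_sub, Real.exp_log hL, Real.exp_log hde]
    field_simp
  have hlog : Real.log (1 + (Real.exp (1 / (1/t)) - 1) * e) ≤ d / L := by
    rw [one_div_one_div]
    have h1 : 1 + (Real.exp t - 1) * e ≤ 1 + d / L := by nlinarith [Real.exp_pos t]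
    have h2 : Real.log (1 + (Real.exp t - 1) * e) ≤ Real.log (1 + d/L) := by
      apply Real.log_le_log _ h1
      nlinarith [Real.one_le_exp (le_of_lt ht)]
    have h3 : Real.log (1 + d/L) ≤ d/L := by
      have := Real.log_le_sub_one_of_pos (show (0:ℝ) < 1 + d/L by positivity)
      linarith
    linarith
  calc Phi e d ≤ (1/t) * Real.log (1 + (Real.exp (1 / (1/t)) - 1) * e) + (1/t) * d := hPhi
    _ ≤ (1/t) * (d/L) + (1/t) * d := by
        have := mul_le_mul_of_nonneg_left hlog (by positivity : (0:ℝ) ≤ 1/t)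
        linarith

lemma lim_aux (c : ℝ) :
    Tendsto (fun x : ℝ => (c + x - Real.log (c + x)) / x) atTop (nhds 1) := by
  have hcx : Tendsto (fun x : ℝ => c + x) atTop atTop :=
    tendsto_atTop_add_const_left _ _ tendsto_id
  have h0 : Tendsto (fun x : ℝ => c / x) atTop (nhds 0) :=
    tendsto_const_nhds.div_atTop tendsto_id
  have hlog1 : Tendsto (fun x : ℝ => Real.log (c + x) / (c + x)) atTop (nhds 0) :=
    (Real.isLittleO_log_id_atTop.tendsto_div_nhds_zero).comp hcx
  have hrat : Tendsto (fun x : ℝ => (c + x) / x) atTop (nhds 1) := by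
    apply Tendsto.congr' _ (by simpa using h0.add (tendsto_const_nhds (x := (1:ℝ))))
    filter_upwards [eventually_gt_atTop 0] with x hx
    field_simp
  have hlog : Tendsto (fun x : ℝ => Real.log (c + x) / x) atTop (nhds 0) := by
    apply Tendsto.congr' _ (by simpa using hlog1.mul hrat)
    filter_upwards [eventually_gt_atTop 0, hcx.eventually (eventually_gt_atTop 0)]
      with x hx hcx0
    field_simp
  have := (h0.add (tendsto_const_nhds (x := (1:ℝ)))).sub hlog
  apply Tendsto.congr' _ (by simpa using this)
  filter_upwards [eventually_gt_atTop 0] with x hx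
  field_simp

lemma lim_aux2 (c : ℝ) :
    Tendsto (fun x : ℝ => 1 + 1 / (c + x)) atTop (nhds 1) := by
  have hcx : Tendsto (fun x : ℝ => c + x) atTop atTop :=
    tendsto_atTop_add_const_left _ _ tendsto_id
  have h1 : Tendsto (fun x : ℝ => (1:ℝ) / (c + x)) atTop (nhds 0) :=
    tendsto_const_nhds.div_atTop hcx
  simpa using (tendsto_const_nhds (x := (1:ℝ))).add h1

/-- Proposition 5 (uncertainty-dominated asymptotics): for fixed `d > 0`,
`Φ(ε,d)·(ln(d/ε) − ln ln(d/ε))/d → 1` as `ε → 0⁺`. -/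
theorem stmt_8 (d : ℝ) (hd : 0 < d) :
    Tendsto (fun e : ℝ =>
        Phi e d * (Real.log (d / e) - Real.log (Real.log (d / e))) / d)
      (nhdsWithin 0 (Set.Ioi 0)) (nhds 1) := by
  have hneglog : Tendsto (fun e : ℝ => -Real.log e) (nhdsWithin 0 (Set.Ioi 0)) atTop :=
    tendsto_neg_atBot_atTop.comp Real.tendsto_log_nhdsGT_zero
  set c := Real.log d with hc
  have hEq : ∀ᶠ e in nhdsWithin (0:ℝ) (Set.Ioi 0),
      Real.log (d/e) = c + (-Real.log e) := by
    filter_upwards [self_mem_nhdsWithin] with e he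
    rw [Real.log_div hd.ne' (ne_of_gt he)]; ring
  have hlow : Tendsto (fun e : ℝ =>
      (Real.log (d/e) - Real.log (Real.log (d/e))) / (-Real.log e))
      (nhdsWithin 0 (Set.Ioi 0)) (nhds 1) := by
    apply Tendsto.congr' _ ((lim_aux c).comp hneglog)
    filter_upwards [hEq] with e he
    simp only [Function.comp]
    rw [he]
  have hup : Tendsto (fun e : ℝ => 1 + 1 / Real.log (d/e))
      (nhdsWithin 0 (Set.Ioi 0)) (nhds 1) := by
    apply Tendsto.congr' _ ((lim_aux2 c).comp hneglog)
    filter_upwards [hEq] with e he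
    simp only [Function.comp]
    rw [he]
  have hδpos : (0:ℝ) < min (min 1 (Real.exp (-d))) d := by positivity
  have hIoo : Set.Ioo (0:ℝ) (min (min 1 (Real.exp (-d))) d) ∈
      nhdsWithin (0:ℝ) (Set.Ioi 0) :=
    Ioo_mem_nhdsGT_of_mem ⟨le_refl 0, hδpos⟩
  refine tendsto_of_tendsto_of_tendsto_of_le_of_le' hlow hup ?_ ?_
  · filter_upwards [hIoo] with e ⟨he0, heδ⟩
    have he1 : e < 1 := lt_of_lt_of_le heδ ((min_le_left _ _).trans (min_le_left _ _))
    have hee : e < Real.exp (-d) :=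
      lt_of_lt_of_le heδ ((min_le_left _ _).trans (min_le_right _ _))
    have hed : Real.log e + d ≤ 0 := by
      have := Real.log_lt_log he0 hee
      rw [Real.log_exp] at this; linarith
    have hLd : 1 < d / e := (one_lt_div he0).mpr (lt_of_lt_of_le heδ (min_le_right _ _))
    have hL : 0 < Real.log (d/e) := Real.log_pos hLd
    have ht : 0 < Real.log (d/e) - Real.log (Real.log (d/e)) := by
      have := Real.log_le_sub_one_of_pos hL; linarith
    have hloge : 0 < -Real.log e := by
      have := Real.log_neg he0 he1; linarith
    have h1 := phi_lower e d hd he0 he1 hed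
    have hlne : Real.log e ≠ 0 := by linarith
    calc (Real.log (d/e) - Real.log (Real.log (d/e))) / (-Real.log e)
        = (d / (-Real.log e)) * (Real.log (d/e) - Real.log (Real.log (d/e))) / d := by
          field_simp
      _ ≤ Phi e d * (Real.log (d/e) - Real.log (Real.log (d/e))) / d := by gcongr
  · filter_upwards [hIoo] with e ⟨he0, heδ⟩
    have hLd : 1 < d / e := (one_lt_div he0).mpr (lt_of_lt_of_le heδ (min_le_right _ _))
    have hL : 0 < Real.log (d/e) := Real.log_pos hLd
    have ht : 0 < Real.log (d/e) - Real.log (Real.log (d/e)) := by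
      have := Real.log_le_sub_one_of_pos hL; linarith
    have h2 := phi_upper e d hd he0 hL
    have hPhi0 : 0 ≤ Phi e d := phi_nonneg e d he0.le hd.le
    have htne : Real.log (d/e) - Real.log (Real.log (d/e)) ≠ 0 := ne_of_gt ht
    calc Phi e d * (Real.log (d/e) - Real.log (Real.log (d/e))) / d
        ≤ ((1/(Real.log (d/e) - Real.log (Real.log (d/e)))) * (d/Real.log (d/e))
            + (1/(Real.log (d/e) - Real.log (Real.log (d/e)))) * d)
            * (Real.log (d/e) - Real.log (Real.log (d/e))) / d := by gcongr
      _ = 1 + 1 / Real.log (d/e) := by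
          field_simp
          ring
end

section
/- Proposition 6 (low-uncertainty asymptotics): For every fixed ε ∈ (0,1), ( Φ(ε,d) − ε ) / √d → √( 2·ε·(1−ε) ) as d → 0⁺; equivalently Φ(ε,d) = ε + √(2·d·ε·(1−ε)) + o(√d). -/
open Real Filter

/-!
Substituting `t = 1/s` gives `Φ(ε,d) - ε = inf_{t>0} (ψ t + d) / t`, where `ψ` is the cumulant
generating function of the centred Bernoulli variable. It is convex, `ψ 0 = 0`, and
`ψ t / t² → ε(1-ε)/2` as `t → 0⁺` (L'Hôpital, since `ψ'' 0 = ε(1-ε)`).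
If `ψ t ≤ r² t²` near `0`, the choice `t = √d / r` bounds the infimum by `2 r √d`; if
`ψ t ≥ r² t²` on `(0, t₀]`, AM-GM on `(0, t₀]` and the monotone slope `ψ t / t` beyond
`t₀` bound it below by `2 r √d` once `d` is small. Letting `r² → ε(1-ε)/2` gives the limit
`2 √(ε(1-ε)/2) = √(2ε(1-ε))`.
-/

open Set Topology

section SquareBounds

variable {f : ℝ → ℝ} {r t₀ d : ℝ}

theorem exists_add_div_le_two_mul_sqrt (hr : 0 < r) (hd : 0 < d)
    (hdt : √d ≤ r * t₀) (hf : ∀ t ∈ Ioc 0 t₀, f t ≤ r ^ 2 * t ^ 2) :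
    ∃ t > 0, (f t + d) / t ≤ 2 * r * √d := by
  have hsd : 0 < √d := sqrt_pos.2 hd
  refine ⟨√d / r, by positivity, ?_⟩
  have ht : √d / r ∈ Ioc 0 t₀ := ⟨by positivity, (div_le_iff₀' hr).2 hdt⟩
  have hsq : r ^ 2 * (√d / r) ^ 2 = d := by field_simp; exact sq_sqrt hd.le
  rw [div_le_iff₀ (by positivity)]
  calc f (√d / r) + d ≤ r ^ 2 * (√d / r) ^ 2 + d := by linarith [hf _ ht]
    _ = 2 * r * √d * (√d / r) := by rw [hsq]; field_simp; rw [sq_sqrt hd.le]; ring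

theorem two_mul_sqrt_le_add_div (hr : 0 < r) (ht₀ : 0 < t₀) (hd : 0 ≤ d)
    (hdt : 2 * √d ≤ r * t₀) (hconv : ConvexOn ℝ (Ici 0) f) (hf0 : f 0 = 0)
    (hf : ∀ t ∈ Ioc 0 t₀, r ^ 2 * t ^ 2 ≤ f t) {t : ℝ} (ht : 0 < t) :
    2 * r * √d ≤ (f t + d) / t := by
  rw [le_div_iff₀ ht]
  rcases le_or_gt t t₀ with htt₀ | htt₀
  · -- AM-GM: `2 (r t) √d ≤ (r t)² + d`
    nlinarith [hf t ⟨ht, htt₀⟩, sq_nonneg (r * t - √d), sq_sqrt hd]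
  · -- by convexity and `f 0 = 0`, the slope `f t / t` is nondecreasing
    have hslope : f t₀ / t₀ ≤ f t / t := by
      simpa [hf0] using
        hconv.secant_mono (a := 0) self_mem_Ici ht₀.le ht.le ht₀.ne' ht.ne' htt₀.le
    have hft₀ : r ^ 2 * t₀ ^ 2 ≤ f t₀ := hf t₀ ⟨ht₀, le_rfl⟩
    have : r ^ 2 * t₀ ≤ f t / t := le_trans (by rw [le_div_iff₀ ht₀]; nlinarith) hslope
    rw [le_div_iff₀ ht] at this
    nlinarith [mul_le_mul_of_nonneg_left hdt (by positivity : 0 ≤ r * t)]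

end SquareBounds

theorem exists_forall_Ioc_mul_sq_le {f : ℝ → ℝ} {a c : ℝ}
    (hf : Tendsto (fun t ↦ f t / t ^ 2) (𝓝[>] 0) (𝓝 a)) (hc : c < a) :
    ∃ t₀ > 0, ∀ t ∈ Ioc 0 t₀, c * t ^ 2 ≤ f t := by
  obtain ⟨t₀, ht₀, h⟩ := mem_nhdsGT_iff_exists_Ioc_subset.1 (hf.eventually (lt_mem_nhds hc))
  exact ⟨t₀, ht₀, fun t ht ↦ ((lt_div_iff₀ (pow_pos ht.1 2)).1 (h ht)).le⟩

theorem exists_forall_Ioc_le_mul_sq {f : ℝ → ℝ} {a c : ℝ}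
    (hf : Tendsto (fun t ↦ f t / t ^ 2) (𝓝[>] 0) (𝓝 a)) (hc : a < c) :
    ∃ t₀ > 0, ∀ t ∈ Ioc 0 t₀, f t ≤ c * t ^ 2 := by
  obtain ⟨t₀, ht₀, h⟩ := mem_nhdsGT_iff_exists_Ioc_subset.1 (hf.eventually (gt_mem_nhds hc))
  exact ⟨t₀, ht₀, fun t ht ↦ ((div_lt_iff₀ (pow_pos ht.1 2)).1 (h ht)).le⟩

theorem eventually_sqrt_lt {δ : ℝ} (hδ : 0 < δ) : ∀ᶠ d in 𝓝[>] 0, √d < δ := by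
  have h : Tendsto (fun d : ℝ ↦ √d) (𝓝[>] 0) (𝓝 0) := by
    simpa using (continuous_sqrt.tendsto 0).mono_left nhdsWithin_le_nhds
  exact h.eventually (gt_mem_nhds hδ)

/-- The cumulant generating function of `X - ε` for `X ∼ Bernoulli ε`. -/
noncomputable def bernoulliCgf (e t : ℝ) : ℝ := log (1 + (exp t - 1) * e) - e * t

/-- The success probability of `Bernoulli ε` exponentially tilted by `t`. -/
noncomputable def tiltedMean (e t : ℝ) : ℝ := e * exp t / (1 + (exp t - 1) * e)

section Bernoulli

variable {e : ℝ}

theorem one_add_exp_sub_one_mul_pos (he₀ : 0 ≤ e) (he₁ : e ≤ 1) (t : ℝ) :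
    0 < 1 + (exp t - 1) * e := by
  rcases he₀.eq_or_lt with rfl | he₀
  · simp
  · nlinarith [exp_pos t]

@[simp]
theorem bernoulliCgf_zero : bernoulliCgf e 0 = 0 := by simp [bernoulliCgf]

theorem hasDerivAt_bernoulliCgf (he₀ : 0 ≤ e) (he₁ : e ≤ 1) (t : ℝ) :
    HasDerivAt (bernoulliCgf e) (tiltedMean e t - e) t := by
  have h := ((((hasDerivAt_exp t).sub_const 1).mul_const e).const_add 1).log
    (one_add_exp_sub_one_mul_pos he₀ he₁ t).ne'
  exact (h.sub ((hasDerivAt_id t).const_mul e)).congr_deriv (by rw [tiltedMean]; ring)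

theorem monotone_tiltedMean (he₀ : 0 ≤ e) (he₁ : e ≤ 1) : Monotone (tiltedMean e) := by
  intro s t hst
  have hs := one_add_exp_sub_one_mul_pos he₀ he₁ s
  have ht := one_add_exp_sub_one_mul_pos he₀ he₁ t
  have hexp := exp_le_exp.2 hst
  rw [tiltedMean, tiltedMean, div_le_div_iff₀ hs ht]
  nlinarith [mul_nonneg (mul_nonneg he₀ (sub_nonneg.2 he₁)) (sub_nonneg.2 hexp)]

theorem hasDerivAt_tiltedMean_zero : HasDerivAt (tiltedMean e) (e * (1 - e)) 0 := by
  have h := ((hasDerivAt_exp 0).const_mul e).div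
    ((((hasDerivAt_exp 0).sub_const 1).mul_const e).const_add 1) (by simp)
  exact h.congr_deriv (by
    simp only [exp_zero, mul_one, sub_self, zero_mul, add_zero, one_mul, one_pow, div_one]; ring)

theorem convexOn_bernoulliCgf (he₀ : 0 ≤ e) (he₁ : e ≤ 1) :
    ConvexOn ℝ univ (bernoulliCgf e) := by
  have hderiv : deriv (bernoulliCgf e) = fun t ↦ tiltedMean e t - e :=
    funext fun t ↦ (hasDerivAt_bernoulliCgf he₀ he₁ t).deriv
  refine Monotone.convexOn_univ_of_deriv
    (fun t ↦ (hasDerivAt_bernoulliCgf he₀ he₁ t).differentiableAt) ?_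
  rw [hderiv]
  exact fun s t hst ↦ sub_le_sub_right (monotone_tiltedMean he₀ he₁ hst) e

theorem bernoulliCgf_nonneg (he₀ : 0 ≤ e) (he₁ : e ≤ 1) (t : ℝ) :
    0 ≤ bernoulliCgf e t := by
  rw [bernoulliCgf, sub_nonneg, le_log_iff_exp_le (one_add_exp_sub_one_mul_pos he₀ he₁ t)]
  -- Jensen for `exp` at the points `t` and `0` with weights `e` and `1 - e`
  have h := convexOn_exp.2 (mem_univ t) (mem_univ 0) he₀ (sub_nonneg.2 he₁) (by ring)
  simp only [smul_eq_mul, mul_zero, add_zero, exp_zero, mul_one] at h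
  linarith

theorem tendsto_bernoulliCgf_div_sq (he₀ : 0 ≤ e) (he₁ : e ≤ 1) :
    Tendsto (fun t ↦ bernoulliCgf e t / t ^ 2) (𝓝[>] 0) (𝓝 (e * (1 - e) / 2)) := by
  have hslope : Tendsto (fun t ↦ (tiltedMean e t - e) / (2 * t)) (𝓝[>] 0)
      (𝓝 (e * (1 - e) / 2)) := by
    have := (hasDerivAt_tiltedMean_zero (e := e)).tendsto_slope_zero_right.div_const 2
    refine this.congr' (eventually_of_mem self_mem_nhdsWithin fun t _ ↦ ?_)
    simp only [tiltedMean, zero_add, exp_zero, mul_one, sub_self, zero_mul, add_zero, div_one,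
      smul_eq_mul]
    ring
  refine HasDerivAt.lhopital_zero_right_on_Ioo one_pos
    (fun t _ ↦ hasDerivAt_bernoulliCgf he₀ he₁ t) (fun t _ ↦ hasDerivAt_pow 2 t) ?_ ?_ ?_ ?_
  · intro t ht
    simp [ht.1.ne']
  · simpa using (hasDerivAt_bernoulliCgf he₀ he₁ 0).continuousAt.tendsto.mono_left
      nhdsWithin_le_nhds
  · simpa using ((continuous_pow 2).tendsto' (0 : ℝ) 0 (by simp)).mono_left nhdsWithin_le_nhds
  · simpa using hslope

end Bernoulli

section Phi

variable {e d : ℝ}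

theorem mul_log_add_mul_eq_add_bernoulliCgf {s : ℝ} (hs : s ≠ 0) :
    s * log (1 + (exp (1 / s) - 1) * e) + s * d =
      e + (bernoulliCgf e (1 / s) + d) / (1 / s) := by
  rw [bernoulliCgf, div_div_eq_mul_div, div_one]
  field_simp
  ring

theorem le_Phi {c : ℝ} (h : ∀ t > 0, c ≤ (bernoulliCgf e t + d) / t) : e + c ≤ Phi e d := by
  refine le_csInf ⟨_, 1, one_pos, rfl⟩ ?_
  rintro _ ⟨s, hs, rfl⟩
  rw [mul_log_add_mul_eq_add_bernoulliCgf hs.ne']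
  linarith [h (1 / s) (by positivity)]

theorem Phi_le (he₀ : 0 ≤ e) (he₁ : e ≤ 1) (hd : 0 ≤ d) {t : ℝ} (ht : 0 < t) :
    Phi e d ≤ e + (bernoulliCgf e t + d) / t := by
  refine csInf_le ⟨e, ?_⟩ ⟨1 / t, by positivity, ?_⟩
  · rintro _ ⟨s, hs, rfl⟩
    rw [mul_log_add_mul_eq_add_bernoulliCgf hs.ne']
    have hψ := bernoulliCgf_nonneg he₀ he₁ (1 / s)
    have : 0 ≤ (bernoulliCgf e (1 / s) + d) / (1 / s) := by positivity
    linarith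
  · rw [mul_log_add_mul_eq_add_bernoulliCgf (by positivity), one_div_one_div]

theorem eventually_lt_Phi_sub_div_sqrt (he₀ : 0 < e) (he₁ : e < 1) {b : ℝ}
    (hb : b < 2 * √(e * (1 - e) / 2)) : ∀ᶠ d in 𝓝[>] 0, b < (Phi e d - e) / √d := by
  have hA : 0 < e * (1 - e) / 2 := by nlinarith
  obtain ⟨r, hbr, hr⟩ := exists_between (max_lt (by linarith : b / 2 < √(e * (1 - e) / 2))
    (sqrt_pos.2 hA))
  have hr₀ : 0 < r := (le_max_right _ _).trans_lt hbr
  obtain ⟨t₀, ht₀, hψ⟩ := exists_forall_Ioc_mul_sq_le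
    (tendsto_bernoulliCgf_div_sq he₀.le he₁.le) ((lt_sqrt hr₀.le).1 hr)
  filter_upwards [self_mem_nhdsWithin, eventually_sqrt_lt (by positivity : 0 < r * t₀ / 2)]
    with d (hd : 0 < d) hdt
  have hPhi := le_Phi fun t ht ↦ two_mul_sqrt_le_add_div hr₀ ht₀ hd.le (by linarith)
    ((convexOn_bernoulliCgf he₀.le he₁.le).subset (subset_univ _) (convex_Ici 0))
    bernoulliCgf_zero hψ ht
  have hsd := sqrt_pos.2 hd
  rw [lt_div_iff₀ hsd]
  nlinarith [le_max_left (b / 2) 0]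

theorem eventually_Phi_sub_div_sqrt_lt (he₀ : 0 ≤ e) (he₁ : e ≤ 1) {b : ℝ}
    (hb : 2 * √(e * (1 - e) / 2) < b) : ∀ᶠ d in 𝓝[>] 0, (Phi e d - e) / √d < b := by
  obtain ⟨r, hr, hrb⟩ := exists_between (by linarith : √(e * (1 - e) / 2) < b / 2)
  have hr₀ : 0 < r := (sqrt_nonneg _).trans_lt hr
  obtain ⟨t₀, ht₀, hψ⟩ := exists_forall_Ioc_le_mul_sq
    (tendsto_bernoulliCgf_div_sq he₀ he₁) ((sqrt_lt' hr₀).1 hr)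
  filter_upwards [self_mem_nhdsWithin, eventually_sqrt_lt (mul_pos hr₀ ht₀)]
    with d (hd : 0 < d) hdt
  obtain ⟨t, ht, hbound⟩ := exists_add_div_le_two_mul_sqrt hr₀ hd hdt.le hψ
  have hsd := sqrt_pos.2 hd
  rw [div_lt_iff₀ hsd]
  nlinarith [Phi_le he₀ he₁ hd.le ht]

end Phi

/-- Proposition 6 (low-uncertainty asymptotics): for fixed `ε ∈ (0,1)`,
`(Φ(ε,d) − ε)/√d → √(2·ε·(1−ε))` as `d → 0⁺`, i.e.
`Φ(ε,d) = ε + √(2·d·ε·(1−ε)) + o(√d)`. -/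
theorem stmt_9 (e : ℝ) (he : e ∈ Set.Ioo (0 : ℝ) 1) :
    Tendsto (fun d : ℝ => (Phi e d - e) / Real.sqrt d)
      (nhdsWithin 0 (Set.Ioi 0)) (nhds (Real.sqrt (2 * e * (1 - e)))) := by
  obtain ⟨he₀, he₁⟩ := he
  have hlim : √(2 * e * (1 - e)) = 2 * √(e * (1 - e) / 2) := by
    rw [show 2 * e * (1 - e) = 2 ^ 2 * (e * (1 - e) / 2) by ring,
      sqrt_mul (by positivity), sqrt_sq zero_le_two]
  rw [hlim]
  exact tendsto_order.2 ⟨fun b hb ↦ eventually_lt_Phi_sub_div_sqrt he₀ he₁ hb,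
    fun b hb ↦ eventually_Phi_sub_div_sqrt_lt he₀.le he₁.le hb⟩
end

section
/- For every ε ∈ [0,1], the function F(s) = s·ln(1 + (e^{1/s} − 1)·ε) is nonincreasing on (0,∞) and F(s) → ε as s → ∞. (Lemma used in the proof of Proposition 1, established via the Lyapunov moment inequality.) -/
/-!
Write `M(t) = 1 + (e^t - 1)ε = ε e^t + (1 - ε)`, the moment generating function of a Bernoulli(ε)
variable, so that `F(s) = s log M(1/s)`. For `0 < a ≤ b`, Lyapunov's (Jensen's) inequality with
exponent `p = b/a ≥ 1` gives `M(1/b)^p ≤ M(p/b) = M(1/a)`, i.e. `F(b) ≤ F(a)`. As `s → ∞`,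
`F(s) = (log M(1/s) - log M(0)) / (1/s)` tends to `(log M)'(0) = M'(0) = ε`.
-/

open Real Filter Topology

lemma one_add_sub_one_mul_rpow_le {ε x p : ℝ} (hε : ε ∈ Set.Icc (0 : ℝ) 1) (hx : 0 ≤ x)
    (hp : 1 ≤ p) : (1 + (x - 1) * ε) ^ p ≤ 1 + (x ^ p - 1) * ε := by
  have h := (convexOn_rpow hp).2 (Set.mem_Ici.2 hx) (Set.mem_Ici.2 zero_le_one)
    hε.1 (sub_nonneg.2 hε.2) (add_sub_cancel ε 1)
  simp only [smul_eq_mul, one_rpow, mul_one] at h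
  rw [show 1 + (x - 1) * ε = ε * x + (1 - ε) by ring]
  linarith

lemma mul_log_one_add_exp_inv_sub_one_mul_antitoneOn {ε : ℝ} (hε : ε ∈ Set.Icc (0 : ℝ) 1) :
    AntitoneOn (fun s : ℝ => s * log (1 + (exp (1 / s) - 1) * ε)) (Set.Ioi 0) := by
  intro a (ha : 0 < a) b (hb : 0 < b) hab
  have hM_pos : 0 < 1 + (exp (1 / b) - 1) * ε := by
    nlinarith [one_le_exp (one_div_pos.2 hb).le, hε.1]
  have hp : 1 ≤ b / a := (one_le_div ha).2 hab
  have hexp : exp (1 / b) ^ (b / a) = exp (1 / a) := by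
    rw [← exp_mul]
    field_simp
  have hlyapunov := one_add_sub_one_mul_rpow_le hε (exp_pos (1 / b)).le hp
  rw [hexp] at hlyapunov
  have hlog := log_le_log (rpow_pos_of_pos hM_pos _) hlyapunov
  rw [log_rpow hM_pos] at hlog
  calc b * log (1 + (exp (1 / b) - 1) * ε)
      = a * (b / a * log (1 + (exp (1 / b) - 1) * ε)) := by field_simp
    _ ≤ a * log (1 + (exp (1 / a) - 1) * ε) := mul_le_mul_of_nonneg_left hlog ha.le

lemma HasDerivAt.tendsto_mul_apply_one_div_atTop {f : ℝ → ℝ} {f' : ℝ} (hf : HasDerivAt f f' 0)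
    (hf0 : f 0 = 0) : Tendsto (fun s : ℝ => s * f (1 / s)) atTop (𝓝 f') := by
  have hslope := (hasDerivAt_iff_tendsto_slope_zero.1 hf).comp
    (tendsto_inv_atTop_nhdsGT_zero.mono_right (nhdsWithin_mono _ fun _ h => ne_of_gt h))
  refine hslope.congr fun s => ?_
  simp [hf0]

lemma hasDerivAt_log_one_add_exp_sub_one_mul (ε : ℝ) :
    HasDerivAt (fun u : ℝ => log (1 + (exp u - 1) * ε)) ε 0 := by
  have hM := (((hasDerivAt_exp 0).sub_const 1).mul_const ε).const_add 1
  simpa using hM.log (by simp)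

/-- Lemma for Proposition 1: `F(s) = s·ln(1 + (e^{1/s} − 1)·ε)` is nonincreasing on `(0,∞)`
and `F(s) → ε` as `s → ∞`. -/
theorem stmt_10 (e : ℝ) (he : e ∈ Set.Icc (0 : ℝ) 1) :
    AntitoneOn (fun s : ℝ => s * Real.log (1 + (Real.exp (1 / s) - 1) * e)) (Set.Ioi 0) ∧
    Tendsto (fun s : ℝ => s * Real.log (1 + (Real.exp (1 / s) - 1) * e))
      atTop (nhds e) :=
  ⟨mul_log_one_add_exp_inv_sub_one_mul_antitoneOn he,
    (hasDerivAt_log_one_add_exp_sub_one_mul e).tendsto_mul_apply_one_div_atTop (by simp)⟩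
end

section
/- Proposition 7: Let h0 ∈ A be a point with μ0({h0}) = 0, let d > 0, set p = 1 − e^{−d}, and define μ = p·δ_{h0} + (1−p)·μ0, where δ_{h0} is the Dirac measure at h0. Then μ is a probability measure with D(μ0‖μ) = d and μ(A) = 1 − e^{−d} + e^{−d}·μ0(A). Consequently Q(d) = sup{ μ'(A) : D(μ0‖μ') ≤ d } satisfies Q(d) ≥ 1 − e^{−d} + e^{−d}·ε ≥ 1 − e^{−d}, where ε = μ0(A). -/
open MeasureTheory Real Filter

/-- Proposition 7: the mixture `μ = p·δ_{h0} + (1−p)·μ0` with `p = 1 − e^{−d}` is a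
probability measure with `D(μ0‖μ) = d` and `μ(A) = 1 − e^{−d} + e^{−d}·μ0(A)`; consequently
`Q(d) = sup{μ'(A) : D(μ0‖μ') ≤ d} ≥ 1 − e^{−d} + e^{−d}·ε ≥ 1 − e^{−d}`. -/
theorem stmt_12 {Ω : Type*} [MeasurableSpace Ω] [MeasurableSingletonClass Ω]
    (μ0 : Measure Ω) [IsProbabilityMeasure μ0]
    (A : Set Ω) (hA : MeasurableSet A) (h0 : Ω) (hh0 : h0 ∈ A) (hsing : μ0 {h0} = 0)
    (d : ℝ) (hd : 0 < d) :
    let p : ℝ := 1 - Real.exp (-d)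
    let μ : Measure Ω := ENNReal.ofReal p • Measure.dirac h0 + ENNReal.ofReal (1 - p) • μ0
    IsProbabilityMeasure μ ∧
    klDiv μ0 μ = ((d : ℝ) : EReal) ∧
    (μ A).toReal = 1 - Real.exp (-d) + Real.exp (-d) * (μ0 A).toReal ∧
    1 - Real.exp (-d) + Real.exp (-d) * (μ0 A).toReal ≤
      sSup {q : ℝ | ∃ μ' : Measure Ω, IsProbabilityMeasure μ' ∧
        klDiv μ0 μ' ≤ (d : EReal) ∧ q = (μ' A).toReal} ∧
    1 - Real.exp (-d) ≤ 1 - Real.exp (-d) + Real.exp (-d) * (μ0 A).toReal := by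
  intro p μ
  have hexp1 : Real.exp (-d) < 1 := Real.exp_lt_one_iff.mpr (neg_lt_zero.mpr hd)
  have hexp0 : (0:ℝ) < Real.exp (-d) := Real.exp_pos _
  have hp0 : 0 ≤ p := by simp only [p]; linarith
  have h1p : 1 - p = Real.exp (-d) := by simp only [p]; ring
  -- μ is a probability measure
  have hprob : IsProbabilityMeasure μ := by
    constructor
    simp only [μ, Measure.add_apply, Measure.smul_apply, smul_eq_mul, measure_univ, mul_one]
    rw [← ENNReal.ofReal_add hp0 (by rw [h1p]; positivity)]
    simp
  haveI := hprob
  haveI : IsFiniteMeasure μ := inferInstance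
  -- the density
  set f : Ω → ENNReal := Set.indicator {h0}ᶜ (fun _ => ENNReal.ofReal (Real.exp d)) with hf_def
  have hf : Measurable f := (measurable_const).indicator (MeasurableSet.singleton h0).compl
  have hae0 : ∀ᵐ x ∂μ0, x ∈ ({h0}ᶜ : Set Ω) := by
    rw [ae_iff]; simpa using hsing
  have heq : μ.withDensity f = μ0 := by
    simp only [μ]
    rw [withDensity_add_measure, withDensity_smul_measure, withDensity_smul_measure]
    have h1 : (Measure.dirac h0).withDensity f = 0 := by
      have : f =ᵐ[Measure.dirac h0] 0 := by
        rw [Filter.EventuallyEq, ae_dirac_eq h0]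
        simp [hf_def]
      rw [withDensity_congr_ae this, withDensity_zero]
    have h2 : μ0.withDensity f = ENNReal.ofReal (Real.exp d) • μ0 := by
      have : f =ᵐ[μ0] (fun _ => ENNReal.ofReal (Real.exp d)) := by
        filter_upwards [hae0] with x hx
        simp [hf_def, Set.indicator_of_mem hx]
      rw [withDensity_congr_ae this, withDensity_const]
    rw [h1, h2, smul_zero, zero_add, h1p, smul_smul, ← ENNReal.ofReal_mul hexp0.le,
      ← Real.exp_add]
    simp
  have hac : μ0 ≪ μ := heq ▸ withDensity_absolutelyContinuous μ f
  have hrn : μ0.rnDeriv μ =ᵐ[μ] f := by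
    conv_lhs => rw [← heq]
    exact Measure.rnDeriv_withDensity μ hf
  have hllr : llr μ0 μ =ᵐ[μ0] fun _ => d := by
    filter_upwards [hac.ae_le hrn, hae0] with x hx hmem
    rw [llr, hx, hf_def, Set.indicator_of_mem hmem, ENNReal.toReal_ofReal (Real.exp_pos d).le,
      Real.log_exp]
  have hint : Integrable (llr μ0 μ) μ0 := by
    rw [integrable_congr hllr]; exact integrable_const d
  have hIntEq : ∫ ω, llr μ0 μ ω ∂μ0 = d := by
    rw [integral_congr_ae hllr]; simp
  have hkl : klDiv μ0 μ = ((d : ℝ) : EReal) := by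
    rw [klDiv, if_pos ⟨hac, hint⟩, hIntEq]
  -- value of μ on A
  have hμA : (μ A).toReal = 1 - Real.exp (-d) + Real.exp (-d) * (μ0 A).toReal := by
    have hdA : Measure.dirac h0 A = 1 := by
      rw [Measure.dirac_apply' h0 hA, Set.indicator_of_mem hh0]; rfl
    have : μ A = ENNReal.ofReal p + ENNReal.ofReal (Real.exp (-d)) * μ0 A := by
      simp only [μ, Measure.add_apply, Measure.smul_apply, smul_eq_mul, hdA, mul_one, h1p]
    rw [this, ENNReal.toReal_add (by simp) (ENNReal.mul_ne_top (by simp) (measure_ne_top μ0 A)),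
      ENNReal.toReal_mul, ENNReal.toReal_ofReal hp0, ENNReal.toReal_ofReal hexp0.le]
  refine ⟨hprob, hkl, hμA, ?_, ?_⟩
  · apply le_csSup
    · refine ⟨1, ?_⟩
      rintro q ⟨μ', hμ', hle, rfl⟩
      calc (μ' A).toReal ≤ (μ' Set.univ).toReal :=
            ENNReal.toReal_mono (measure_ne_top μ' _) (measure_mono (Set.subset_univ A))
        _ = 1 := by simp
    · exact ⟨μ, hprob, le_of_eq hkl, hμA.symm⟩
  · have : 0 ≤ Real.exp (-d) * (μ0 A).toReal := by positivity
    linarith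
end

section
/- For every ε ∈ (0,1), the function g(t) = t^ε · (t−1)^{1−ε} / (t − 1 + ε) is strictly increasing on (1,∞), with g(t) → 0 as t → 1⁺ and g(t) → 1 as t → ∞. Consequently, for every d > 0 there exists a unique t > 1 with g(t) = e^{−d}. (Existence–uniqueness of the root in equation (mu) of Theorem 3.) -/
/-!
The logarithm of `g` has derivative `ε (1 - ε) / (t (t - 1) (t - 1 + ε)) > 0`, so `g` is strictly
increasing on `(1, ∞)`. It is continuous on `[1, ∞)` with `g 1 = 0`, and writing
`g t = (1 - 1/t)^(1-ε) / (1 - (1-ε)/t)` shows `g t → 1`. The intermediate value theorem and strict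
monotonicity then give exactly one solution of `g t = y` for every `y ∈ (0, 1)`, such as `e^{-d}`.
-/

open Real Filter Set Topology

/-- The weighted geometric mean of `t` and `t - 1` over their weighted arithmetic mean
`e t + (1 - e) (t - 1) = t - 1 + e`. -/
noncomputable def gmAmRatio (e t : ℝ) : ℝ := t ^ e * (t - 1) ^ (1 - e) / (t - 1 + e)

section OrderTopology

variable {α δ : Type*} [ConditionallyCompleteLinearOrder α] [TopologicalSpace α] [OrderTopology α]
  [DenselyOrdered α] [LinearOrder δ] [TopologicalSpace δ] [OrderClosedTopology δ]

lemma existsUnique_mem_Ioi_eq_of_tendsto_atTop {f : α → δ} {a : α} {u y : δ}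
    (hcont : ContinuousOn f (Ici a)) (hmono : StrictMonoOn f (Ioi a))
    (htop : Tendsto f atTop (𝓝 u)) (hy : y ∈ Ioo (f a) u) : ∃! x, x ∈ Ioi a ∧ f x = y := by
  obtain ⟨b, hab, hyb⟩ := ((eventually_ge_atTop a).and (htop.eventually_const_lt hy.2)).exists
  obtain ⟨x, hx, rfl⟩ := intermediate_value_Ioo hab (hcont.mono Icc_subset_Ici_self) ⟨hy.1, hyb⟩
  exact ⟨x, ⟨hx.1, rfl⟩, fun x' ⟨hx', hfx'⟩ => hmono.injOn hx' hx.1 hfx'⟩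

end OrderTopology

section

variable {e t : ℝ}

lemma gmAmRatio_pos (he : 0 ≤ e) (ht : 1 < t) : 0 < gmAmRatio e t := by
  have h1 : 0 < t - 1 := sub_pos.2 ht
  have h2 : 0 < t - 1 + e := by linarith
  exact div_pos (mul_pos (rpow_pos_of_pos (by linarith) e) (rpow_pos_of_pos h1 _)) h2

lemma log_gmAmRatio (he : 0 ≤ e) (ht : 1 < t) :
    log (gmAmRatio e t) = e * log t + (1 - e) * log (t - 1) - log (t - 1 + e) := by
  have h0 : 0 < t := by linarith
  have h1 : 0 < t - 1 := sub_pos.2 ht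
  have h2 : 0 < t - 1 + e := by linarith
  rw [gmAmRatio, log_div (by positivity) h2.ne', log_mul (by positivity) (by positivity),
    log_rpow h0, log_rpow h1]

lemma hasDerivAt_log_gmAmRatio (he : 0 ≤ e) (ht : 1 < t) :
    HasDerivAt (fun s => log (gmAmRatio e s)) (e * (1 - e) / (t * (t - 1) * (t - 1 + e))) t := by
  have h0 : 0 < t := by linarith
  have h1 : 0 < t - 1 := sub_pos.2 ht
  have h2 : 0 < t - 1 + e := by linarith
  have hlog := ((((hasDerivAt_id t).log h0.ne').const_mul e).add
    ((((hasDerivAt_id t).sub_const 1).log h1.ne').const_mul (1 - e))).sub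
    ((((hasDerivAt_id t).sub_const 1).add_const e).log h2.ne')
  refine (hlog.congr_of_eventuallyEq ?_).congr_deriv ?_
  · filter_upwards [Ioi_mem_nhds ht] with s hs using log_gmAmRatio he hs
  · simp only [id_eq]
    field_simp
    ring

lemma strictMonoOn_gmAmRatio (he : e ∈ Ioo 0 1) : StrictMonoOn (gmAmRatio e) (Ioi 1) := by
  have hlog : StrictMonoOn (fun t => log (gmAmRatio e t)) (Ioi 1) := by
    refine strictMonoOn_of_deriv_pos (convex_Ioi 1)
      (fun t ht => (hasDerivAt_log_gmAmRatio he.1.le ht).continuousAt.continuousWithinAt)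
      fun t ht => ?_
    rw [interior_Ioi] at ht
    have h0 : 0 < t := zero_lt_one.trans ht
    have h1 : 0 < t - 1 := sub_pos.2 ht
    have h2 : 0 < t - 1 + e := by linarith [he.1]
    rw [(hasDerivAt_log_gmAmRatio he.1.le ht).deriv]
    exact div_pos (mul_pos he.1 (sub_pos.2 he.2)) (by positivity)
  intro a ha b hb hab
  exact (log_lt_log_iff (gmAmRatio_pos he.1.le ha) (gmAmRatio_pos he.1.le hb)).1 (hlog ha hb hab)

lemma continuousOn_gmAmRatio (he₀ : 0 < e) (he₁ : e ≤ 1) : ContinuousOn (gmAmRatio e) (Ici 1) := by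
  refine ((continuous_rpow_const he₀.le).mul ((continuous_rpow_const (sub_nonneg.2 he₁)).comp
    (continuous_sub_right 1))).continuousOn.div (by fun_prop)
    fun t ht => (show 0 < t - 1 + e by linarith [mem_Ici.1 ht]).ne'

lemma gmAmRatio_one (he : e ≠ 1) : gmAmRatio e 1 = 0 := by
  rw [gmAmRatio, sub_self, zero_rpow (sub_ne_zero.2 he.symm), mul_zero, zero_div]

lemma tendsto_gmAmRatio_nhdsGT_one (he : e ∈ Ioo 0 1) : Tendsto (gmAmRatio e) (𝓝[>] 1) (𝓝 0) := by
  have := (continuousOn_gmAmRatio he.1 he.2.le 1 self_mem_Ici).tendsto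
  rw [gmAmRatio_one he.2.ne] at this
  exact this.mono_left (nhdsWithin_mono _ Ioi_subset_Ici_self)

lemma gmAmRatio_eq_of_one_le (ht : 1 ≤ t) :
    gmAmRatio e t = (1 - t⁻¹) ^ (1 - e) / (1 - (1 - e) * t⁻¹) := by
  have h0 : 0 < t := by linarith
  have hden : t - 1 + e = t * (1 - (1 - e) * t⁻¹) := by field_simp; ring
  have hsplit : t - 1 = t * (1 - t⁻¹) := by field_simp
  rw [gmAmRatio, hden, hsplit, mul_rpow h0.le (sub_nonneg.2 (inv_le_one_of_one_le₀ ht)),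
    ← mul_assoc, ← rpow_add h0, add_sub_cancel, rpow_one, mul_div_mul_left _ _ h0.ne']

lemma tendsto_gmAmRatio_atTop (e : ℝ) : Tendsto (gmAmRatio e) atTop (𝓝 1) := by
  have hG : Tendsto (fun u : ℝ => (1 - u) ^ (1 - e) / (1 - (1 - e) * u)) (𝓝 0) (𝓝 1) := by
    have hcont : ContinuousAt (fun u : ℝ => (1 - u) ^ (1 - e) / (1 - (1 - e) * u)) 0 :=
      ((continuousAt_rpow_const _ _ (Or.inl (by norm_num))).comp (by fun_prop)).div
        (by fun_prop) (by norm_num)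
    simpa using hcont.tendsto
  refine (hG.comp tendsto_inv_atTop_zero).congr' ?_
  filter_upwards [eventually_ge_atTop 1] with t ht using (gmAmRatio_eq_of_one_le ht).symm

end

/-- Existence–uniqueness of the root in equation (mu) of Theorem 3:
`g(t) = t^ε·(t−1)^{1−ε}/(t−1+ε)` is strictly increasing on `(1,∞)` with `g(t) → 0` as
`t → 1⁺` and `g(t) → 1` as `t → ∞`; hence for every `d > 0` there is a unique `t > 1`
with `g(t) = e^{−d}`. -/
theorem stmt_13 (e : ℝ) (he : e ∈ Set.Ioo (0 : ℝ) 1) :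
    StrictMonoOn (fun t : ℝ => t ^ e * (t - 1) ^ (1 - e) / (t - 1 + e)) (Set.Ioi 1) ∧
    Tendsto (fun t : ℝ => t ^ e * (t - 1) ^ (1 - e) / (t - 1 + e))
      (nhdsWithin 1 (Set.Ioi 1)) (nhds 0) ∧
    Tendsto (fun t : ℝ => t ^ e * (t - 1) ^ (1 - e) / (t - 1 + e)) atTop (nhds 1) ∧
    ∀ d : ℝ, 0 < d → ∃! t : ℝ, t ∈ Set.Ioi (1 : ℝ) ∧
      t ^ e * (t - 1) ^ (1 - e) / (t - 1 + e) = Real.exp (-d) := by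
  refine ⟨strictMonoOn_gmAmRatio he, tendsto_gmAmRatio_nhdsGT_one he, tendsto_gmAmRatio_atTop e,
    fun d hd => ?_⟩
  refine existsUnique_mem_Ioi_eq_of_tendsto_atTop (f := gmAmRatio e)
    (continuousOn_gmAmRatio he.1 he.2.le) (strictMonoOn_gmAmRatio he) (tendsto_gmAmRatio_atTop e)
    ⟨?_, exp_lt_one_iff.2 (neg_lt_zero.2 hd)⟩
  rw [gmAmRatio_one he.2.ne]
  exact exp_pos _
end

section
/- Let ε = μ0(A) ∈ (0,1), let t > 1, and set λ = t(t−1)/(t−1+ε). Define μ* as the measure with density (w.r.t. μ0) equal to λ/(t−1) on A and λ/t off A. Then μ* is a probability measure, μ*(A) = λ·ε/(t−1), and D(μ0‖μ*) = −ln( t^ε (t−1)^{1−ε}/(t−1+ε) ). (The worst-case density achieving the supremum in Theorem 3 when t is chosen so that this divergence equals d.) -/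
/-!
The density of `μ*` with respect to `μ0` takes the two values `a = λ/(t-1) = t/(t-1+ε)` on `A`
and `b = λ/t = (t-1)/(t-1+ε)` off `A`. Hence the total mass is `aε + b(1-ε) = 1`, and since
`dμ0/dμ*` is `1/a` on `A` and `1/b` off `A`, `D(μ0‖μ*) = -(ε log a + (1-ε) log b)`, which is
`-log(t^ε (t-1)^{1-ε}/(t-1+ε))`.
-/

open MeasureTheory Real Filter

open scoped ENNReal

section WithDensitySelf

variable {Ω : Type*} [MeasurableSpace Ω] {μ : Measure Ω} [SigmaFinite μ] {f : Ω → ℝ≥0∞}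

lemma llr_withDensity_right_self (hf : AEMeasurable f μ) (hf_ne_zero : ∀ᵐ x ∂μ, f x ≠ 0)
    (hf_ne_top : ∀ᵐ x ∂μ, f x ≠ ∞) :
    llr μ (μ.withDensity f) =ᵐ[μ] fun x ↦ -log (f x).toReal := by
  filter_upwards [Measure.rnDeriv_withDensity_right μ μ hf hf_ne_zero hf_ne_top,
    μ.rnDeriv_self] with x hx hself
  rw [llr, hx, hself, mul_one, ENNReal.toReal_inv, log_inv]

lemma klDiv_withDensity_right_self (hf : AEMeasurable f μ) (hf_ne_zero : ∀ᵐ x ∂μ, f x ≠ 0)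
    (hf_ne_top : ∀ᵐ x ∂μ, f x ≠ ∞) (hint : Integrable (fun x ↦ log (f x).toReal) μ) :
    klDiv μ (μ.withDensity f) = ((-∫ x, log (f x).toReal ∂μ : ℝ) : EReal) := by
  have hllr := llr_withDensity_right_self hf hf_ne_zero hf_ne_top
  rw [klDiv, if_pos ⟨withDensity_absolutelyContinuous' hf hf_ne_zero, hint.neg.congr hllr.symm⟩,
    integral_congr_ae hllr, integral_neg]

end WithDensitySelf

section TwoValuedDensity

variable {Ω : Type*} [MeasurableSpace Ω] {μ : Measure Ω} [IsFiniteMeasure μ]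
  {A : Set Ω} [DecidablePred (· ∈ A)] {a b : ℝ}

lemma integral_ite_mem (hA : MeasurableSet A) :
    ∫ ω, (if ω ∈ A then a else b) ∂μ = μ.real A * a + μ.real Aᶜ * b := by
  change ∫ ω, A.piecewise (fun _ ↦ a) (fun _ ↦ b) ω ∂μ = _
  rw [integral_piecewise hA integrableOn_const integrableOn_const, setIntegral_const,
    setIntegral_const, smul_eq_mul, smul_eq_mul]

lemma withDensity_ofReal_ite_apply (hA : MeasurableSet A) (ha : 0 ≤ a) :
    μ.withDensity (fun ω ↦ ENNReal.ofReal (if ω ∈ A then a else b)) A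
      = ENNReal.ofReal (a * μ.real A) := by
  rw [withDensity_apply _ hA, setLIntegral_congr_fun hA (g := fun _ ↦ ENNReal.ofReal a)
    (fun ω hω ↦ by rw [if_pos hω]), setLIntegral_const, ENNReal.ofReal_mul ha, ofReal_measureReal]

lemma withDensity_ofReal_ite_apply_compl (hA : MeasurableSet A) (hb : 0 ≤ b) :
    μ.withDensity (fun ω ↦ ENNReal.ofReal (if ω ∈ A then a else b)) Aᶜ
      = ENNReal.ofReal (b * μ.real Aᶜ) := by
  rw [withDensity_apply _ hA.compl, setLIntegral_congr_fun hA.compl (g := fun _ ↦ ENNReal.ofReal b)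
    (fun ω hω ↦ by rw [if_neg hω]), setLIntegral_const, ENNReal.ofReal_mul hb, ofReal_measureReal]

lemma withDensity_ofReal_ite_univ (hA : MeasurableSet A) (ha : 0 ≤ a) (hb : 0 ≤ b) :
    μ.withDensity (fun ω ↦ ENNReal.ofReal (if ω ∈ A then a else b)) Set.univ
      = ENNReal.ofReal (a * μ.real A + b * μ.real Aᶜ) := by
  rw [← Set.union_compl_self A, measure_union disjoint_compl_right hA.compl,
    withDensity_ofReal_ite_apply hA ha, withDensity_ofReal_ite_apply_compl hA hb,
    ENNReal.ofReal_add (by positivity) (by positivity)]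

lemma klDiv_withDensity_ofReal_ite (hA : MeasurableSet A) (ha : 0 < a) (hb : 0 < b) :
    klDiv μ (μ.withDensity fun ω ↦ ENNReal.ofReal (if ω ∈ A then a else b))
      = ((-(μ.real A * log a + μ.real Aᶜ * log b) : ℝ) : EReal) := by
  have hlog : (fun ω ↦ log (ENNReal.ofReal (if ω ∈ A then a else b)).toReal)
      = fun ω ↦ if ω ∈ A then log a else log b := by
    ext ω
    split_ifs
    · rw [ENNReal.toReal_ofReal ha.le]
    · rw [ENNReal.toReal_ofReal hb.le]
  have hint : Integrable (fun ω ↦ if ω ∈ A then log a else log b) μ :=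
    Integrable.piecewise hA (integrable_const (log a)).integrableOn
      (integrable_const (log b)).integrableOn
  have hmeas : Measurable fun ω ↦ ENNReal.ofReal (if ω ∈ A then a else b) :=
    (measurable_const.piecewise hA measurable_const).ennreal_ofReal
  rw [klDiv_withDensity_right_self hmeas.aemeasurable ?_ ?_ (hlog ▸ hint), hlog, integral_ite_mem hA]
  all_goals
  · refine ae_of_all _ fun ω ↦ ?_
    split_ifs <;> simp [ha, hb]

end TwoValuedDensity

lemma log_rpow_mul_rpow_div_eq {t ε : ℝ} (ht : 1 < t) (hε : 0 ≤ ε) :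
    log (t ^ ε * (t - 1) ^ (1 - ε) / (t - 1 + ε))
      = ε * log (t / (t - 1 + ε)) + (1 - ε) * log ((t - 1) / (t - 1 + ε)) := by
  have ht1 : 0 < t - 1 := sub_pos.2 ht
  have hden : 0 < t - 1 + ε := by linarith
  rw [log_div (by positivity) hden.ne', log_mul (by positivity) (by positivity),
    log_rpow (by linarith), log_rpow ht1, log_div (by linarith) hden.ne', log_div ht1.ne' hden.ne']
  ring

open scoped Classical in
/-- The worst-case density achieving the supremum in Theorem 3: with
`λ = t(t−1)/(t−1+ε)`, the measure with density `λ/(t−1)` on `A` and `λ/t` off `A`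
(w.r.t. `μ0`) is a probability measure with `μ*(A) = λ·ε/(t−1)` and
`D(μ0‖μ*) = −ln(t^ε(t−1)^{1−ε}/(t−1+ε))`. -/
theorem stmt_15 {Ω : Type*} [MeasurableSpace Ω] (μ0 : Measure Ω) [IsProbabilityMeasure μ0]
    (A : Set Ω) (hA : MeasurableSet A) (he : (μ0 A).toReal ∈ Set.Ioo (0 : ℝ) 1)
    (t : ℝ) (ht : 1 < t) :
    let ε : ℝ := (μ0 A).toReal
    let lam : ℝ := t * (t - 1) / (t - 1 + ε)
    let μ : Measure Ω := μ0.withDensity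
      (fun ω => ENNReal.ofReal (if ω ∈ A then lam / (t - 1) else lam / t))
    IsProbabilityMeasure μ ∧
    (μ A).toReal = lam * ε / (t - 1) ∧
    klDiv μ0 μ = ((-(Real.log (t ^ ε * (t - 1) ^ (1 - ε) / (t - 1 + ε))) : ℝ) : EReal) := by
  intro ε lam μ
  have hε : 0 < ε := he.1
  have ht1 : t - 1 ≠ 0 := by linarith
  have hden : 0 < t - 1 + ε := by linarith
  have hdensA : lam / (t - 1) = t / (t - 1 + ε) := by simp only [lam]; field_simp
  have hdensAc : lam / t = (t - 1) / (t - 1 + ε) := by simp only [lam]; field_simp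
  have hposA : 0 < lam / (t - 1) := hdensA ▸ div_pos (by linarith) hden
  have hposAc : 0 < lam / t := hdensAc ▸ div_pos (by linarith) hden
  have hmassA : μ0.real A = ε := rfl
  have hmassAc : μ0.real Aᶜ = 1 - ε := probReal_compl_eq_one_sub hA
  refine ⟨⟨?_⟩, ?_, ?_⟩
  · rw [withDensity_ofReal_ite_univ hA hposA.le hposAc.le, hmassA, hmassAc, hdensA, hdensAc,
      ← ENNReal.ofReal_one]
    congr 1
    field_simp
    ring
  · rw [withDensity_ofReal_ite_apply hA hposA.le, ENNReal.toReal_ofReal (by positivity), hmassA,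
      div_mul_eq_mul_div]
  · rw [klDiv_withDensity_ofReal_ite hA hposA hposAc, hmassA, hmassAc, hdensA, hdensAc,
      log_rpow_mul_rpow_div_eq ht hε.le]
end

section
/- Proposition 8 (error floor): For every fixed d > 0, Ψ(ε,d) → 1 − e^{−d} as ε → 0⁺; i.e., the compound outage probability for the class {μ : D(μ0‖μ) ≤ d} tends to the floor 1 − e^{−d} as the nominal outage probability vanishes. -/
/-!
Put `r = ε / (t - 1)`. Taking logarithms, the root equation reads
`log (1 + r) = d + ε log (t / (t - 1))`, while `Ψ = t ε / (t - 1 + ε) = t r / (1 + r)`.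
From `1 ≤ t / (t - 1) ≤ (1 + r) / ε` we get `d ≤ log (1 + r) ≤ (d - ε log ε) / (1 - ε)`, so
`r → e^d - 1`; then `t - 1 = ε / r → 0` and `Ψ → (e^d - 1) / e^d = 1 - e^{-d}`.
-/

open Real Filter Set Topology

section Root

variable {d e t : ℝ}

lemma psi_eq_of_root (ht : 1 < t)
    (h : t ^ e * (t - 1) ^ (1 - e) / (t - 1 + e) = exp (-d)) :
    exp (-d) * (t - 1) ^ (e - 1) * t ^ (1 - e) * e = t * e / (t - 1 + e) := by
  have hs : 0 < t - 1 := by linarith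
  have ht_cancel : t ^ e * t ^ (1 - e) = t := by
    rw [← rpow_add (by linarith)]; norm_num
  have hs_cancel : (t - 1) ^ (1 - e) * (t - 1) ^ (e - 1) = 1 := by
    rw [← rpow_add hs]; norm_num
  rw [← h]
  linear_combination (e / (t - 1 + e)) * ((t - 1) ^ (1 - e) * (t - 1) ^ (e - 1)) * ht_cancel
    + (t * e / (t - 1 + e)) * hs_cancel

lemma log_one_add_div_eq_of_root (he : 0 < e) (ht : 1 < t)
    (h : t ^ e * (t - 1) ^ (1 - e) / (t - 1 + e) = exp (-d)) :
    log (1 + e / (t - 1)) = d + e * log (t / (t - 1)) := by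
  have hs : 0 < t - 1 := by linarith
  have hse : 0 < t - 1 + e := by linarith
  have hlog := congrArg log ((div_eq_iff hse.ne').mp h)
  rw [log_mul (by positivity) (by positivity), log_mul (exp_ne_zero _) hse.ne',
    log_rpow (by linarith), log_rpow hs, log_exp] at hlog
  rw [show 1 + e / (t - 1) = (t - 1 + e) / (t - 1) by field_simp, log_div hse.ne' hs.ne',
    log_div (by linarith) hs.ne']
  linarith

lemma le_log_one_add_div_of_root (he : 0 < e) (ht : 1 < t)
    (h : t ^ e * (t - 1) ^ (1 - e) / (t - 1 + e) = exp (-d)) :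
    d ≤ log (1 + e / (t - 1)) := by
  rw [log_one_add_div_eq_of_root he ht h]
  have : 0 ≤ log (t / (t - 1)) := log_nonneg ((one_le_div (by linarith)).mpr (by linarith))
  nlinarith

lemma one_sub_mul_log_one_add_div_le_of_root (he : 0 < e) (he1 : e ≤ 1) (ht : 1 < t)
    (h : t ^ e * (t - 1) ^ (1 - e) / (t - 1 + e) = exp (-d)) :
    (1 - e) * log (1 + e / (t - 1)) ≤ d - e * log e := by
  have hs : 0 < t - 1 := by linarith
  have hr : 0 < 1 + e / (t - 1) := by positivity
  have hratio : t / (t - 1) ≤ (1 + e / (t - 1)) / e := by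
    rw [div_le_div_iff₀ hs he]
    field_simp
    nlinarith
  have hlog : log (t / (t - 1)) ≤ log (1 + e / (t - 1)) - log e := by
    rw [← log_div hr.ne' he.ne']
    exact log_le_log (by positivity) hratio
  have := log_one_add_div_eq_of_root he ht h
  nlinarith

end Root

lemma tendsto_of_le_of_one_sub_mul_le {f : ℝ → ℝ} {d : ℝ}
    (hlow : ∀ e ∈ Ioo (0 : ℝ) 1, d ≤ f e)
    (hup : ∀ e ∈ Ioo (0 : ℝ) 1, (1 - e) * f e ≤ d - e * log e) :
    Tendsto f (𝓝[Ioo 0 1] 0) (𝓝 d) := by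
  have hbound : Tendsto (fun e => (d - e * log e) / (1 - e)) (𝓝[Ioo 0 1] 0) (𝓝 d) := by
    have hcont : ContinuousAt (fun e => (d - e * log e) / (1 - e)) 0 :=
      ((continuous_const.sub continuous_mul_log).continuousAt).div
        (continuous_const.sub continuous_id).continuousAt (by norm_num)
    simpa using hcont.tendsto.mono_left nhdsWithin_le_nhds
  refine tendsto_of_tendsto_of_tendsto_of_le_of_le' tendsto_const_nhds hbound ?_ ?_
  · filter_upwards [self_mem_nhdsWithin] with e he using hlow e he
  · filter_upwards [self_mem_nhdsWithin] with e he
    rw [le_div_iff₀ (by linarith [he.2]), mul_comm]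
    exact hup e he

lemma tendsto_mul_div_sub_one_add {l : Filter ℝ} {t : ℝ → ℝ} {c : ℝ} (hl : l ≤ 𝓝 0)
    (hc : c ≠ 0) (hc1 : 1 + c ≠ 0) (hne : ∀ᶠ e in l, e ≠ 0 ∧ t e - 1 ≠ 0)
    (hratio : Tendsto (fun e => e / (t e - 1)) l (𝓝 c)) :
    Tendsto (fun e => t e * e / (t e - 1 + e)) l (𝓝 (c / (1 + c))) := by
  have ht_one : Tendsto t l (𝓝 1) := by
    have hlim := ((tendsto_id.mono_right hl).div hratio hc).const_add 1
    rw [zero_div, add_zero] at hlim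
    refine hlim.congr' ?_
    filter_upwards [hne] with e ⟨he, hs⟩
    simp only [Pi.div_apply, id]
    field_simp
    ring
  have hlim := ht_one.mul (hratio.div (hratio.const_add 1) hc1)
  rw [one_mul] at hlim
  refine hlim.congr' ?_
  filter_upwards [hne] with e ⟨he, hs⟩
  by_cases hse : t e - 1 + e = 0
  · simp [hse, show 1 + e / (t e - 1) = 0 by field_simp; linarith]
  · simp only [Pi.div_apply]
    field_simp

/-- Proposition 8 (error floor): for fixed `d > 0`, with `t(ε)` the unique root `> 1` of
`t^ε(t−1)^{1−ε}/(t−1+ε) = e^{−d}`, the compound outage probability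
`Ψ(ε,d) = e^{−d}·(t(ε)−1)^{ε−1}·t(ε)^{1−ε}·ε` tends to `1 − e^{−d}` as `ε → 0⁺`. -/
theorem stmt_16 (d : ℝ) (hd : 0 < d) (t : ℝ → ℝ)
    (ht : ∀ e ∈ Set.Ioo (0 : ℝ) 1, 1 < t e ∧
      (t e) ^ e * (t e - 1) ^ (1 - e) / (t e - 1 + e) = Real.exp (-d)) :
    Tendsto (fun e : ℝ => Real.exp (-d) * (t e - 1) ^ (e - 1) * (t e) ^ (1 - e) * e)
      (nhdsWithin 0 (Set.Ioo 0 1)) (nhds (1 - Real.exp (-d))) := by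
  have hmem : ∀ᶠ e in 𝓝[Ioo (0 : ℝ) 1] 0, e ∈ Ioo (0 : ℝ) 1 := self_mem_nhdsWithin
  have hlog : Tendsto (fun e => log (1 + e / (t e - 1))) (𝓝[Ioo 0 1] 0) (𝓝 d) :=
    tendsto_of_le_of_one_sub_mul_le
      (fun e he => le_log_one_add_div_of_root he.1 (ht e he).1 (ht e he).2)
      (fun e he => one_sub_mul_log_one_add_div_le_of_root he.1 he.2.le (ht e he).1 (ht e he).2)
  have hratio : Tendsto (fun e => e / (t e - 1)) (𝓝[Ioo 0 1] 0) (𝓝 (exp d - 1)) := by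
    refine (((continuous_exp.tendsto d).comp hlog).sub_const 1).congr' ?_
    filter_upwards [hmem] with e he
    have : 0 < e / (t e - 1) := div_pos he.1 (by linarith [(ht e he).1])
    simp [exp_log (by linarith : 0 < 1 + e / (t e - 1))]
  have hlim := tendsto_mul_div_sub_one_add nhdsWithin_le_nhds
    (by linarith [add_one_lt_exp hd.ne']) (by simp [(exp_pos d).ne'])
    (by filter_upwards [hmem] with e he using ⟨he.1.ne', by linarith [(ht e he).1]⟩) hratio
  rw [add_sub_cancel, sub_div, div_self (exp_pos d).ne', one_div, ← exp_neg] at hlim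
  refine hlim.congr' ?_
  filter_upwards [hmem] with e he
  rw [psi_eq_of_root (ht e he).1 (ht e he).2]
end

section
/- Proposition 9: For every fixed ε ∈ (0,1), ( Ψ(ε,d) − ε ) / √d → √( 2·ε·(1−ε) ) as d → 0⁺; equivalently Ψ(ε,d) = ε + √(2·ε·(1−ε)·d) + o(√d). -/
/-! Put `u = 1/t` and `a = 1 - ε`. The defining equation of `t` becomes `d = φ_a(u)` with
`φ_a(u) = log (1 - a u) - a log (1 - u)`, and `Ψ - ε = ε(1-ε) u / (1 - a u)`.
Since `φ_a(0) = φ_a'(0) = 0` and `φ_a'(x) = a(1-a) x / ((1-x)(1-ax))`, comparing derivatives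
squeezes `φ_a(u)` between `a(1-a)u²/2` and `a(1-a)u²/(2(1-u)²)`. Hence `u → 0` as `d → 0⁺`,
`u/√d → √(2/(a(1-a)))`, and `(Ψ - ε)/√d → ε(1-ε) √(2/(ε(1-ε))) = √(2ε(1-ε))`. -/

open Real Filter Set Topology

noncomputable def phi (a u : ℝ) : ℝ := log (1 - a * u) - a * log (1 - u)

lemma hasDerivAt_phi (a : ℝ) {u : ℝ} (hu : 1 - u ≠ 0) (hau : 1 - a * u ≠ 0) :
    HasDerivAt (phi a) (a * (1 - a) * u / ((1 - u) * (1 - a * u))) u := by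
  have h1 : HasDerivAt (fun u : ℝ => 1 - a * u) (-a) u := by
    simpa using ((hasDerivAt_id u).const_mul a).const_sub 1
  have h2 : HasDerivAt (fun u : ℝ => 1 - u) (-1) u := by
    simpa using (hasDerivAt_id u).const_sub 1
  exact ((h1.log hau).sub ((h2.log hu).const_mul a)).congr_deriv (by field_simp; ring)

lemma hasDerivAt_half_mul_sq (c x : ℝ) : HasDerivAt (fun x : ℝ => c * x ^ 2 / 2) (c * x) x :=
  (((hasDerivAt_pow 2 x).const_mul c).div_const 2).congr_deriv (by push_cast; ring)

lemma le_of_hasDerivAt_le {f g f' g' : ℝ → ℝ} {u : ℝ} (hu : 0 ≤ u)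
    (hf : ∀ x ∈ Icc 0 u, HasDerivAt f (f' x) x) (hg : ∀ x ∈ Icc 0 u, HasDerivAt g (g' x) x)
    (h0 : f 0 ≤ g 0) (hle : ∀ x ∈ Ico 0 u, f' x ≤ g' x) : f u ≤ g u :=
  image_le_of_deriv_right_le_deriv_boundary
    (fun x hx => (hf x hx).continuousAt.continuousWithinAt)
    (fun x hx => (hf x (Ico_subset_Icc_self hx)).hasDerivWithinAt) h0
    (fun x hx => (hg x hx).continuousAt.continuousWithinAt)
    (fun x hx => (hg x (Ico_subset_Icc_self hx)).hasDerivWithinAt) hle ⟨hu, le_rfl⟩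

section bounds

variable {a u : ℝ}

lemma hasDerivAt_phi_of_mem_Icc (ha₁ : a ≤ 1) (hu₁ : u < 1) : ∀ x ∈ Icc 0 u,
    HasDerivAt (phi a) (a * (1 - a) * x / ((1 - x) * (1 - a * x))) x := by
  intro x ⟨hx₀, hxu⟩
  exact hasDerivAt_phi a (by linarith) (by nlinarith)

lemma half_mul_sq_le_phi (ha₀ : 0 ≤ a) (ha₁ : a ≤ 1) (hu₀ : 0 ≤ u) (hu₁ : u < 1) :
    a * (1 - a) * u ^ 2 / 2 ≤ phi a u := by
  refine le_of_hasDerivAt_le hu₀ (fun x _ => hasDerivAt_half_mul_sq _ x)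
    (hasDerivAt_phi_of_mem_Icc ha₁ hu₁) (by simp [phi]) fun x ⟨hx₀, hxu⟩ => ?_
  have hD : 0 < (1 - x) * (1 - a * x) := mul_pos (by linarith) (by nlinarith)
  refine le_div_self (by positivity) hD ?_
  nlinarith [mul_nonneg hx₀ (mul_nonneg ha₀ (sub_nonneg.2 (hxu.trans hu₁).le))]

lemma phi_le_half_mul_sq (ha₀ : 0 ≤ a) (ha₁ : a ≤ 1) (hu₀ : 0 ≤ u) (hu₁ : u < 1) :
    phi a u ≤ a * (1 - a) / (1 - u) ^ 2 * u ^ 2 / 2 := by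
  refine le_of_hasDerivAt_le hu₀ (hasDerivAt_phi_of_mem_Icc ha₁ hu₁)
    (fun x _ => hasDerivAt_half_mul_sq _ x) (by simp [phi]) fun x ⟨hx₀, hxu⟩ => ?_
  rw [div_mul_eq_mul_div, mul_comm _ x, ← mul_assoc]
  have : 0 ≤ a * (1 - a) * x := by positivity
  have hD : (1 - u) ^ 2 ≤ (1 - x) * (1 - a * x) := calc
    (1 - u) ^ 2 ≤ (1 - x) ^ 2 := by gcongr
    _ ≤ (1 - x) * (1 - a * x) := by rw [sq]; gcongr <;> nlinarith
  gcongr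

end bounds

lemma tendsto_phi_div_sq {a : ℝ} (ha₀ : 0 ≤ a) (ha₁ : a ≤ 1) :
    Tendsto (fun u => phi a u / u ^ 2) (𝓝[>] 0) (𝓝 (a * (1 - a) / 2)) := by
  have hupper : Tendsto (fun u : ℝ => a * (1 - a) / (1 - u) ^ 2 / 2) (𝓝[>] 0)
      (𝓝 (a * (1 - a) / 2)) := by
    have : ContinuousAt (fun u : ℝ => a * (1 - a) / (1 - u) ^ 2 / 2) 0 := by
      fun_prop (disch := norm_num)
    simpa using this.tendsto.mono_left nhdsWithin_le_nhds
  have hIoo : Ioo (0 : ℝ) 1 ∈ 𝓝[>] 0 := Ioo_mem_nhdsGT one_pos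
  refine tendsto_of_tendsto_of_tendsto_of_le_of_le' tendsto_const_nhds hupper ?_ ?_
  · filter_upwards [hIoo] with u ⟨hu₀, hu₁⟩
    rw [le_div_iff₀ (by positivity)]
    linarith [half_mul_sq_le_phi ha₀ ha₁ hu₀.le hu₁]
  · filter_upwards [hIoo] with u ⟨hu₀, hu₁⟩
    rw [div_le_iff₀ (by positivity)]
    linarith [phi_le_half_mul_sq ha₀ ha₁ hu₀.le hu₁]

section inverse

variable {a : ℝ} {u : ℝ → ℝ}

lemma tendsto_nhdsGT_zero_of_phi_eq (ha₀ : 0 < a) (ha₁ : a < 1)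
    (hu : ∀ d > 0, u d ∈ Ioo 0 1 ∧ phi a (u d) = d) : Tendsto u (𝓝[>] 0) (𝓝[>] 0) := by
  have hbound : ∀ d > 0, u d ≤ √(2 * d / (a * (1 - a))) := fun d hd => by
    obtain ⟨⟨hu₀, hu₁⟩, hphi⟩ := hu d hd
    have := half_mul_sq_le_phi ha₀.le ha₁.le hu₀.le hu₁
    refine le_sqrt_of_sq_le ?_
    rw [le_div_iff₀ (by nlinarith)]
    linarith
  have hsqrt : Tendsto (fun d : ℝ => √(2 * d / (a * (1 - a)))) (𝓝[>] 0) (𝓝 0) := by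
    have : ContinuousAt (fun d : ℝ => √(2 * d / (a * (1 - a)))) 0 := by fun_prop
    simpa using this.tendsto.mono_left nhdsWithin_le_nhds
  refine tendsto_nhdsWithin_iff.2 ⟨squeeze_zero' ?_ ?_ hsqrt, ?_⟩ <;>
    filter_upwards [self_mem_nhdsWithin] with d hd
  · exact (hu d hd).1.1.le
  · exact hbound d hd
  · exact (hu d hd).1.1

lemma tendsto_div_sqrt_of_phi_eq (ha₀ : 0 < a) (ha₁ : a < 1)
    (hu : ∀ d > 0, u d ∈ Ioo 0 1 ∧ phi a (u d) = d) :
    Tendsto (fun d => u d / √d) (𝓝[>] 0) (𝓝 √(2 / (a * (1 - a)))) := by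
  have hlim := (((tendsto_phi_div_sq ha₀.le ha₁.le).comp
    (tendsto_nhdsGT_zero_of_phi_eq ha₀ ha₁ hu)).sqrt).inv₀ (by
      have : 0 < a * (1 - a) := mul_pos ha₀ (by linarith)
      positivity)
  rw [← sqrt_inv, inv_div] at hlim
  refine hlim.congr' ?_
  filter_upwards [self_mem_nhdsWithin] with d hd
  obtain ⟨⟨hu₀, -⟩, hphi⟩ := hu d hd
  simp only [Function.comp_apply, hphi, sqrt_div' _ (sq_nonneg _), sqrt_sq hu₀.le, inv_div]

end inverse

lemma phi_inv_eq_neg_log {e t : ℝ} (he : 0 < e) (ht : 1 < t) :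
    phi (1 - e) t⁻¹ = -log (t ^ e * (t - 1) ^ (1 - e) / (t - 1 + e)) := by
  have ht₀ : 0 < t := by linarith
  have ht₁ : 0 < t - 1 := by linarith
  have hte : 0 < t - 1 + e := by linarith
  have h₁ : 1 - (1 - e) * t⁻¹ = (t - 1 + e) / t := by field_simp; ring
  have h₂ : 1 - t⁻¹ = (t - 1) / t := by field_simp
  rw [phi, h₁, h₂, log_div hte.ne' ht₀.ne', log_div ht₁.ne' ht₀.ne',
    log_div (by positivity) hte.ne', log_mul (by positivity) (by positivity),
    log_rpow ht₀, log_rpow ht₁]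
  ring

lemma rpow_ratio_mul_rpow_sub_eq {e t : ℝ} (he : 0 < e) (ht : 1 < t) :
    t ^ e * (t - 1) ^ (1 - e) / (t - 1 + e) * (t - 1) ^ (e - 1) * t ^ (1 - e) * e - e
      = e * (1 - e) * t⁻¹ / (1 - (1 - e) * t⁻¹) := by
  have ht₀ : 0 < t := by linarith
  have ht₁ : 0 < t - 1 := by linarith
  have hte : 0 < t - 1 + e := by linarith
  have h₁ : (t - 1) ^ (1 - e) * (t - 1) ^ (e - 1) = 1 := by
    rw [← rpow_add ht₁, show 1 - e + (e - 1) = 0 by ring, rpow_zero]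
  have h₂ : t ^ e * t ^ (1 - e) = t := by
    rw [← rpow_add ht₀, show e + (1 - e) = 1 by ring, rpow_one]
  calc t ^ e * (t - 1) ^ (1 - e) / (t - 1 + e) * (t - 1) ^ (e - 1) * t ^ (1 - e) * e - e
      = (t ^ e * t ^ (1 - e)) * ((t - 1) ^ (1 - e) * (t - 1) ^ (e - 1)) * e / (t - 1 + e) - e := by
        ring
    _ = e * (1 - e) * t⁻¹ / (1 - (1 - e) * t⁻¹) := by
        have hden : 1 - (1 - e) * t⁻¹ = (t - 1 + e) / t := by field_simp; ring
        rw [h₁, h₂, hden]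
        field_simp
        ring

/-- Proposition 9: for fixed `ε ∈ (0,1)`, with `t(d)` the unique root `> 1` of
`t^ε(t−1)^{1−ε}/(t−1+ε) = e^{−d}` and `Ψ(ε,d) = e^{−d}·(t(d)−1)^{ε−1}·t(d)^{1−ε}·ε`,
`(Ψ(ε,d) − ε)/√d → √(2·ε·(1−ε))` as `d → 0⁺`, i.e.
`Ψ(ε,d) = ε + √(2·ε·(1−ε)·d) + o(√d)`. -/
theorem stmt_17 (e : ℝ) (he : e ∈ Set.Ioo (0 : ℝ) 1) (t : ℝ → ℝ)
    (ht : ∀ d : ℝ, 0 < d → 1 < t d ∧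
      (t d) ^ e * (t d - 1) ^ (1 - e) / (t d - 1 + e) = Real.exp (-d)) :
    Tendsto (fun d : ℝ =>
        (Real.exp (-d) * (t d - 1) ^ (e - 1) * (t d) ^ (1 - e) * e - e) / Real.sqrt d)
      (nhdsWithin 0 (Set.Ioi 0)) (nhds (Real.sqrt (2 * e * (1 - e)))) := by
  obtain ⟨he₀, he₁⟩ := he
  have hu : ∀ d > 0, (t d)⁻¹ ∈ Ioo 0 1 ∧ phi (1 - e) (t d)⁻¹ = d := fun d hd => by
    obtain ⟨ht₁, heq⟩ := ht d hd
    refine ⟨⟨by positivity, inv_lt_one_of_one_lt₀ ht₁⟩, ?_⟩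
    rw [phi_inv_eq_neg_log he₀ ht₁, heq, log_exp, neg_neg]
  have hu_lim := tendsto_nhdsGT_zero_of_phi_eq (a := 1 - e) (by linarith) (by linarith) hu
  have hfactor : Tendsto (fun d => e * (1 - e) / (1 - (1 - e) * (t d)⁻¹)) (𝓝[>] 0)
      (𝓝 (e * (1 - e))) := by
    have : ContinuousAt (fun u : ℝ => e * (1 - e) / (1 - (1 - e) * u)) 0 := by
      fun_prop (disch := norm_num)
    simpa [Function.comp_def] using this.tendsto.comp (hu_lim.mono_right nhdsWithin_le_nhds)
  have hlim := hfactor.mul (tendsto_div_sqrt_of_phi_eq (by linarith) (by linarith) hu)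
  have hval : e * (1 - e) * √(2 / ((1 - e) * (1 - (1 - e)))) = √(2 * e * (1 - e)) := by
    have hp : 0 < e * (1 - e) := mul_pos he₀ (by linarith)
    rw [show (1 - e) * (1 - (1 - e)) = e * (1 - e) by ring]
    nth_rw 1 [← sqrt_sq hp.le]
    rw [← sqrt_mul (sq_nonneg _)]
    congr 1
    field_simp
  rw [hval] at hlim
  refine hlim.congr' ?_
  filter_upwards [self_mem_nhdsWithin] with d hd
  obtain ⟨ht₁, heq⟩ := ht d hd
  rw [← heq, rpow_ratio_mul_rpow_sub_eq he₀ ht₁]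
  ring
end
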